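/- arXiv:math/0406354 — 8 statements merged into one kernel-verified Lean document; each statement's English description precedes it below -/
import Mathlib

section
/- For nonnegative integers k, m, s with s > k, the alternating sum over i from 0 to m of (−1)^i · C(2k+1, s+i) · C(k+i, k) · C(k+m−i, k) equals C(m+s−k−1, m) · C(2k+m+1, m+s). -/
/-!
Both sides, as functions of `m`, satisfy the first-order recurrence
`(m + 1) (m + s + 1) a (m + 1) = (m + s - k) (2k + m + 2) a m` and agree at `m = 0`.
For the closed form this is immediate. For the sum it is a Wilf–Zeilberger argument: write the
summand as `T i j` with `i + j = m`; then `T i (j + 1)` and `T (i + 1) j` are rational multiples of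
`T i j`, and with the certificate `i (s + i) T i j` the recurrence becomes a telescoping sum along
the antidiagonal `i + j = m`.
-/

open Finset

theorem Nat.cast_choose_succ_right_mul (n a : ℕ) :
    (n.choose (a + 1) : ℤ) * (a + 1) = n.choose a * (n - a) := by
  rcases le_or_gt a n with h | h
  · rw [← Nat.cast_sub h]
    exact_mod_cast Nat.choose_succ_right_eq n a
  · simp [Nat.choose_eq_zero_of_lt h, Nat.choose_eq_zero_of_lt (h.trans (Nat.lt_succ_self a))]

theorem Nat.cast_choose_add_succ_mul (k j : ℕ) :
    ((k + j + 1).choose k : ℤ) * (j + 1) = (k + j).choose k * (k + j + 1) := by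
  have h := Nat.choose_mul_succ_eq (k + j) k
  rw [show k + j + 1 - k = j + 1 by omega] at h
  exact_mod_cast h.symm

theorem Finset.Nat.sum_antidiagonal_sub_succ {M : Type*} [AddCommGroup M] (h : ℕ → ℕ → M)
    (n : ℕ) :
    ∑ p ∈ antidiagonal n, (h p.1 (p.2 + 1) - h (p.1 + 1) p.2) = h 0 (n + 1) - h (n + 1) 0 := by
  have left := Nat.sum_antidiagonal_succ (n := n) (f := fun p ↦ h p.1 p.2)
  have right := Nat.sum_antidiagonal_succ' (n := n) (f := fun p ↦ h p.1 p.2)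
  rw [sum_sub_distrib, eq_sub_of_add_eq' right.symm, eq_sub_of_add_eq' left.symm]
  abel

theorem eq_of_first_order_recurrence {R : Type*} [MonoidWithZero R] [IsLeftCancelMulZero R]
    {f g : ℕ → R} (a b : ℕ → R) (ha : ∀ n, a n ≠ 0)
    (hf : ∀ n, a n * f (n + 1) = b n * f n) (hg : ∀ n, a n * g (n + 1) = b n * g n)
    (h0 : f 0 = g 0) : f = g := by
  funext n
  induction n with
  | zero => exact h0
  | succ n ih => exact mul_left_cancel₀ (ha n) (by rw [hf, hg, ih])

namespace AltSumChoose

def summand (k s i j : ℕ) : ℤ :=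
  (-1) ^ i * (2 * k + 1).choose (s + i) * (k + i).choose k * (k + j).choose k

def antidiagSum (k s m : ℕ) : ℤ :=
  ∑ p ∈ antidiagonal m, summand k s p.1 p.2

def closedForm (k s m : ℕ) : ℤ :=
  (m + s - k - 1).choose m * (2 * k + m + 1).choose (m + s)

variable (k s : ℕ)

theorem summand_succ_right (i j : ℕ) :
    (j + 1) * summand k s i (j + 1) = (k + j + 1) * summand k s i j := by
  unfold summand
  rw [← add_assoc]
  linear_combination ((-1) ^ i * (2 * k + 1).choose (s + i) * (k + i).choose k : ℤ) *
    Nat.cast_choose_add_succ_mul k j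

theorem summand_succ_left (i j : ℕ) :
    (i + 1) * (s + i + 1) * summand k s (i + 1) j =
      -((2 * k + 1 - (s + i)) * (k + i + 1)) * summand k s i j := by
  unfold summand
  have hs := Nat.cast_choose_succ_right_mul (2 * k + 1) (s + i)
  have hk := Nat.cast_choose_add_succ_mul k i
  rw [← add_assoc, ← add_assoc]
  push_cast at hs ⊢
  linear_combination (-(-1) ^ i * (k + j).choose k : ℤ) *
    ((k + i + 1).choose k * (i + 1) * hs + (2 * k + 1 - (s + i)) * (2 * k + 1).choose (s + i) * hk)

theorem summand_wz (i j : ℕ) :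
    ((i + j + 1) * (i + j + s + 1) : ℤ) * summand k s i (j + 1)
        - ((i + j + s - k) * (2 * k + i + j + 2) : ℤ) * summand k s i j
      = i * (s + i) * summand k s i (j + 1) - (i + 1) * (s + i + 1) * summand k s (i + 1) j := by
  linear_combination (2 * i + j + s + 1 : ℤ) * summand_succ_right k s i j
    + summand_succ_left k s i j

theorem antidiagSum_succ (m : ℕ) :
    ((m + 1) * (m + s + 1) : ℤ) * antidiagSum k s (m + 1)
      = ((m + s - k) * (2 * k + m + 2) : ℤ) * antidiagSum k s m := by
  have wz : ∀ p ∈ antidiagonal m,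
      ((m + 1) * (m + s + 1) : ℤ) * summand k s p.1 (p.2 + 1)
          - ((m + s - k) * (2 * k + m + 2) : ℤ) * summand k s p.1 p.2
        = p.1 * (s + p.1) * summand k s p.1 (p.2 + 1)
          - (p.1 + 1 : ℕ) * (s + (p.1 + 1 : ℕ)) * summand k s (p.1 + 1) p.2 := by
    intro p hp
    rw [HasAntidiagonal.mem_antidiagonal] at hp
    subst hp
    push_cast
    linear_combination summand_wz k s p.1 p.2
  have telescope := (sum_congr rfl wz).trans
    (Nat.sum_antidiagonal_sub_succ (fun i j : ℕ ↦ (i : ℤ) * (s + i) * summand k s i j) m)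
  rw [sum_sub_distrib, ← mul_sum, ← mul_sum] at telescope
  unfold antidiagSum
  rw [Nat.sum_antidiagonal_succ', mul_add]
  push_cast at telescope
  linear_combination telescope

theorem closedForm_succ (hs : k < s) (m : ℕ) :
    ((m + 1) * (m + s + 1) : ℤ) * closedForm k s (m + 1)
      = ((m + s - k) * (2 * k + m + 2) : ℤ) * closedForm k s m := by
  obtain ⟨t, rfl⟩ : ∃ t, s = k + 1 + t := ⟨s - (k + 1), by omega⟩
  unfold closedForm
  rw [show m + 1 + (k + 1 + t) - k - 1 = m + t + 1 by omega,
    show m + (k + 1 + t) - k - 1 = m + t by omega,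
    show 2 * k + (m + 1) + 1 = 2 * k + m + 1 + 1 by omega,
    show m + 1 + (k + 1 + t) = m + (k + 1 + t) + 1 by omega]
  have hm : ((m + t + 1) * (m + t).choose m : ℤ) = (m + t + 1).choose (m + 1) * (m + 1) := by
    exact_mod_cast Nat.add_one_mul_choose_eq (m + t) m
  have hn : ((2 * k + m + 1 + 1) * (2 * k + m + 1).choose (m + (k + 1 + t)) : ℤ)
      = (2 * k + m + 1 + 1).choose (m + (k + 1 + t) + 1) * (m + (k + 1 + t) + 1) := by
    exact_mod_cast Nat.add_one_mul_choose_eq (2 * k + m + 1) (m + (k + 1 + t))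
  push_cast
  linear_combination
    (-(m + k + t + 2 : ℤ) * (2 * k + m + 1 + 1).choose (m + (k + 1 + t) + 1)) * hm
    - ((m + t + 1 : ℤ) * (m + t).choose m) * hn

end AltSumChoose

open AltSumChoose in
theorem alt_sum_choose_of_gt (k m s : ℕ) (hs : k < s) :
    ∑ i ∈ Finset.range (m + 1),
      (-1 : ℤ) ^ i * ((2 * k + 1).choose (s + i)) * ((k + i).choose k) *
        ((k + m - i).choose k)
      = ((m + s - k - 1).choose m : ℤ) * ((2 * k + m + 1).choose (m + s)) := by
  have hrec : antidiagSum k s = closedForm k s :=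
    eq_of_first_order_recurrence _ _ (fun m ↦ by positivity) (antidiagSum_succ k s)
      (closedForm_succ k s hs) (by simp [antidiagSum, closedForm, summand])
  have hm := congrFun hrec m
  rw [antidiagSum, Nat.sum_antidiagonal_eq_sum_range_succ_mk] at hm
  rw [← closedForm, ← hm]
  refine sum_congr rfl fun i hi ↦ ?_
  rw [summand, show k + (m - i) = k + m - i by have := mem_range.mp hi; omega]
end

section
/- For nonnegative integers k, m, s with k + 1 − m ≤ s ≤ k, the alternating sum over i from 0 to m of (−1)^i · C(2k+1, s+i) · C(k+i, k) · C(k+m−i, k) equals 0. -/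
/-!
With `j = s + i`, the summand is `(-1)^s (k!)^{-2} (-1)^j C(2k+1, j) P(j)`, where
`P(x) = (x + k - s)_k (k + m + s - x)_k` is a product of two falling factorials, a polynomial of
degree `2k`. Hence `∑_{j ≤ 2k+1} (-1)^j C(2k+1, j) P(j)`, a `(2k+1)`-st finite difference of `P`,
vanishes. The bounds on `s` make `P` vanish at every `j ≤ 2k+1` outside `[s, s + m]`,
so this full sum is exactly the given one.
-/

open Finset Polynomial

theorem sum_range_neg_one_pow_mul_choose_mul_eval_eq_zero {R : Type*} [CommRing R] {P : R[X]}
    {n : ℕ} (hP : P.natDegree < n) :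
    ∑ j ∈ range (n + 1), (-1 : R) ^ j * n.choose j * P.eval (j : R) = 0 := by
  have h := fwdDiff_iter_eq_sum_shift (1 : R) P.eval n 0
  rw [Polynomial.fwdDiff_iter_eq_zero_of_degree_lt hP, Pi.zero_apply] at h
  calc ∑ j ∈ range (n + 1), (-1 : R) ^ j * n.choose j * P.eval (j : R)
      = (-1) ^ n * ∑ j ∈ range (n + 1),
          ((-1 : ℤ) ^ (n - j) * n.choose j) • P.eval (0 + j • 1) := by
        rw [mul_sum]
        refine sum_congr rfl fun j hj => ?_
        obtain ⟨d, rfl⟩ := Nat.exists_eq_add_of_le (Nat.lt_succ_iff.mp (mem_range.mp hj))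
        simp only [Nat.add_sub_cancel_left, zsmul_eq_mul, nsmul_eq_mul, mul_one, zero_add]
        push_cast
        ring_nf
        simp
    _ = 0 := by rw [← h, mul_zero]

noncomputable def descFactorialProduct (k m s : ℕ) : ℤ[X] :=
  (descPochhammer ℤ k).comp (X + C ((k - s : ℕ) : ℤ)) *
    (descPochhammer ℤ k).comp (C ((k + m + s : ℕ) : ℤ) - X)

theorem natDegree_descFactorialProduct_le (k m s : ℕ) :
    (descFactorialProduct k m s).natDegree ≤ 2 * k := by
  have hcomp_le : ∀ q : ℤ[X], q.natDegree ≤ 1 → ((descPochhammer ℤ k).comp q).natDegree ≤ k :=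
    fun q hq => natDegree_comp_le.trans <| by
      simpa [descPochhammer_natDegree] using Nat.mul_le_mul_left k hq
  refine natDegree_mul_le.trans ?_
  have h₁ := hcomp_le (X + C ((k - s : ℕ) : ℤ)) (by compute_degree)
  have h₂ := hcomp_le (C ((k + m + s : ℕ) : ℤ) - X) (by compute_degree)
  omega

theorem eval_descFactorialProduct {k m s j : ℕ} (hj : j ≤ k + m + s) :
    (descFactorialProduct k m s).eval (j : ℤ) =
      ((j + (k - s)).descFactorial k * (k + m + s - j).descFactorial k : ℕ) := by
  rw [descFactorialProduct, eval_mul, eval_comp, eval_comp]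
  simp only [eval_add, eval_sub, eval_X, eval_C]
  rw [← Nat.cast_add, ← Nat.cast_sub hj, descPochhammer_eval_eq_descFactorial,
    descPochhammer_eval_eq_descFactorial, Nat.cast_mul]

theorem alt_sum_choose_eq_zero (k m s : ℕ) (h1 : k + 1 - m ≤ s) (h2 : s ≤ k) :
    ∑ i ∈ Finset.range (m + 1),
      (-1 : ℤ) ^ i * ((2 * k + 1).choose (s + i)) * ((k + i).choose k) *
        ((k + m - i).choose k) = 0 := by
  set g : ℕ → ℤ := fun j =>
    (-1) ^ j * (2 * k + 1).choose j * (descFactorialProduct k m s).eval (j : ℤ)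
  have hsum : ∑ j ∈ range (2 * k + 1 + 1), g j = 0 :=
    sum_range_neg_one_pow_mul_choose_mul_eval_eq_zero
      ((natDegree_descFactorialProduct_le k m s).trans_lt (Nat.lt_succ_self _))
  have hsupp : Function.support g ⊆ Ico s (s + m + 1) := by
    intro j hj
    have hj2k : j ≤ 2 * k + 1 := by
      by_contra! h
      simp [g, Nat.choose_eq_zero_of_lt h] at hj
    simp only [Function.mem_support, g, eval_descFactorialProduct (by omega : j ≤ k + m + s),
      ne_eq, mul_eq_zero, Nat.cast_eq_zero, Nat.descFactorial_eq_zero_iff_lt, not_or] at hj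
    simp only [coe_Ico, Set.mem_Ico]
    omega
  have hsupp_range : Function.support g ⊆ range (2 * k + 1 + 1) := by
    intro j hj
    by_contra! h
    simp [g, Nat.choose_eq_zero_of_lt (by simpa using h : 2 * k + 1 < j)] at hj
  have hsum_Ico : ∑ j ∈ Ico s (s + m + 1), g j = 0 := by
    rw [← finsum_eq_sum_of_support_subset g hsupp, finsum_eq_sum_of_support_subset g hsupp_range, hsum]
  have hterm : ∀ i ∈ range (m + 1), g (s + i) = (-1) ^ s * (k.factorial : ℤ) ^ 2 *
      ((-1 : ℤ) ^ i * ((2 * k + 1).choose (s + i)) * ((k + i).choose k) *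
        ((k + m - i).choose k)) := by
    intro i hi
    have him : i ≤ m := Nat.lt_succ_iff.mp (mem_range.mp hi)
    simp only [g]
    rw [eval_descFactorialProduct (by omega), show s + i + (k - s) = k + i by omega,
      show k + m + s - (s + i) = k + m - i by omega, Nat.descFactorial_eq_factorial_mul_choose,
      Nat.descFactorial_eq_factorial_mul_choose]
    push_cast
    ring
  rw [sum_Ico_eq_sum_range, show s + m + 1 - s = m + 1 by omega, sum_congr rfl hterm,
    ← mul_sum] at hsum_Ico
  exact (mul_eq_zero.mp hsum_Ico).resolve_left (by positivity)
end

section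
/- For nonnegative integers k, m, s with s ≤ k, the sum over i from 0 to s of C(k−i, k−s) · C(k+i, k) · C(k+m−i, m) equals C(k+m−s, m) · C(2k+m+1, s). -/
/-!
Trinomial revision `C(k-i, k-s) C(k+m-i, m) = C(k+m-s, m) C(k+m-i, s-i)` pulls the factor
`C(k+m-s, m)` out of every term. What remains, `∑ C(k+i, i) C(k+m-i, s-i)`, is the Chu–Vandermonde
identity evaluated at the negative integers `-(k+1)` and `-(k+m-s+1)`, since
`C(-(a+1), i) = (-1)^i C(a+i, i)`.
-/

open Finset

theorem Ring.choose_neg_natCast_add_one (a i : ℕ) :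
    Ring.choose (-(a + 1 : ℤ)) i = (-1) ^ i * (a + i).choose i := by
  rw [Ring.choose_neg, Units.smul_def, Int.coe_negOnePow_natCast, smul_eq_mul,
    show (a + 1 + i - 1 : ℤ) = ((a + i : ℕ) : ℤ) by push_cast; ring, Ring.choose_natCast]

theorem Nat.sum_antidiagonal_add_choose_mul_add_choose (a b s : ℕ) :
    ∑ ij ∈ antidiagonal s, (a + ij.1).choose ij.1 * (b + ij.2).choose ij.2
      = (a + b + 1 + s).choose s := by
  have key := Ring.add_choose_eq s (Commute.all (-(a + 1 : ℤ)) (-(b + 1)))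
  rw [show -(a + 1 : ℤ) + -(b + 1) = -((a + b + 1 : ℕ) + 1 : ℤ) by push_cast; ring] at key
  simp only [Ring.choose_neg_natCast_add_one] at key
  have hsign : ∀ ij ∈ antidiagonal s,
      (-1) ^ ij.1 * ((a + ij.1).choose ij.1 : ℤ) * ((-1) ^ ij.2 * (b + ij.2).choose ij.2)
        = (-1) ^ s * ((a + ij.1).choose ij.1 * (b + ij.2).choose ij.2 : ℕ) := by
    intro ij hij
    rw [← mem_antidiagonal.mp hij]
    push_cast
    ring
  rw [sum_congr rfl hsign, ← mul_sum] at key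
  exact_mod_cast (mul_left_cancel₀ (pow_ne_zero s (by norm_num)) key).symm

theorem Nat.add_choose_mul_add_add_choose (j t m : ℕ) :
    (j + t).choose t * (j + t + m).choose m = (t + m).choose m * (j + t + m).choose j := by
  have h := Nat.choose_mul (n := j + t + m) (k := j + t) (s := j) (by omega)
  rw [Nat.add_sub_cancel_left, show j + t + m - j = t + m by omega] at h
  rw [← Nat.choose_symm_add (a := j), ← Nat.choose_symm_add (a := j + t),
    ← Nat.choose_symm_add (a := t)]
  linarith

theorem sum_choose_three (k m s : ℕ) (hs : s ≤ k) :
    ∑ i ∈ Finset.range (s + 1),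
      (k - i).choose (k - s) * (k + i).choose k * (k + m - i).choose m
      = (k + m - s).choose m * (2 * k + m + 1).choose s := by
  have hterm : ∀ i ∈ range (s + 1),
      (k - i).choose (k - s) * (k + i).choose k * (k + m - i).choose m
        = (k + m - s).choose m * ((k + i).choose i * (k + m - s + (s - i)).choose (s - i)) := by
    intro i hi
    have his : i ≤ s := mem_range_succ_iff.mp hi
    have htrinom := Nat.add_choose_mul_add_add_choose (s - i) (k - s) m
    rw [show s - i + (k - s) = k - i by omega, show k - i + m = k + m - s + (s - i) by omega,
      show k - s + m = k + m - s by omega] at htrinom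
    rw [show k + m - i = k + m - s + (s - i) by omega, Nat.choose_symm_add, mul_right_comm,
      htrinom]
    ring
  calc _ = ∑ i ∈ range (s + 1),
        (k + m - s).choose m * ((k + i).choose i * (k + m - s + (s - i)).choose (s - i)) :=
        sum_congr rfl hterm
    _ = (k + m - s).choose m *
        ∑ ij ∈ antidiagonal s, (k + ij.1).choose ij.1 * (k + m - s + ij.2).choose ij.2 := by
      rw [Nat.sum_antidiagonal_eq_sum_range_succ
        (fun i j => (k + i).choose i * (k + m - s + j).choose j), mul_sum]
    _ = _ := by
      rw [Nat.sum_antidiagonal_add_choose_mul_add_choose]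
      congr 2
      omega
end

section
/- Let R = ℤ[U,V,W,X,Y,Z]/(UX + VY + WZ), with lowercase letters denoting images of the variables. For every prime p, letting λ = ((ux)^p + (vy)^p + (wz)^p)/p ∈ R (which is well-defined with integer coefficients), for every natural number k, λ·(xyz)^k does not lie in the ideal (x^{p+k}, y^{p+k}, z^{p+k}) of R. -/
open MvPolynomial

/-- The hypersurface `ℤ[U,V,W,X,Y,Z]/(UX + VY + WZ)`,
with variables `U = X 0, V = X 1, W = X 2, X = X 3, Y = X 4, Z = X 5`. -/
noncomputable abbrev HypR : Type :=
  MvPolynomial (Fin 6) ℤ ⧸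
    Ideal.span {(X 0 : MvPolynomial (Fin 6) ℤ) * X 3 + X 1 * X 4 + X 2 * X 5}

noncomputable def hu : HypR := Ideal.Quotient.mk _ (X 0)
noncomputable def hv : HypR := Ideal.Quotient.mk _ (X 1)
noncomputable def hw : HypR := Ideal.Quotient.mk _ (X 2)
noncomputable def hx : HypR := Ideal.Quotient.mk _ (X 3)
noncomputable def hy : HypR := Ideal.Quotient.mk _ (X 4)
noncomputable def hz : HypR := Ideal.Quotient.mk _ (X 5)

namespace SinghAux

noncomputable section

abbrev P6 := MvPolynomial (Fin 6) ℤ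
abbrev P2 := MvPolynomial (Fin 2) ℤ

def Fq : P6 := (X 0 : MvPolynomial (Fin 6) ℤ) * X 3 + X 1 * X 4 + X 2 * X 5

abbrev Iq : Ideal P6 := Ideal.span {Fq}

/-- component extraction / substitution -/
def δ (k : ℕ) (e : Fin 6 →₀ ℕ) : P2 :=
  if e 3 = e 0 + k ∧ e 4 = e 1 + k ∧ e 5 = e 2 + k then
    X 0 ^ (e 0) * X 1 ^ (e 1) * (- X 0 - X 1) ^ (e 2) else 0

def Ψ (k : ℕ) (Q : P6) : P2 := ∑ e ∈ Q.support, coeff e Q • δ k e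

lemma Ψ_eq_sum {k : ℕ} {Q : P6} {S : Finset (Fin 6 →₀ ℕ)} (h : Q.support ⊆ S) :
    Ψ k Q = ∑ e ∈ S, coeff e Q • δ k e := by
  refine (Finset.sum_subset h fun e _ he => ?_)
  rw [notMem_support_iff.mp he, zero_smul]

lemma Ψ_add (k : ℕ) (Q R : P6) : Ψ k (Q + R) = Ψ k Q + Ψ k R := by
  classical
  rw [Ψ_eq_sum (S := Q.support ∪ R.support) (support_add),
      Ψ_eq_sum (S := Q.support ∪ R.support) (Finset.subset_union_left),
      Ψ_eq_sum (S := Q.support ∪ R.support) (Finset.subset_union_right),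
      ← Finset.sum_add_distrib]
  refine Finset.sum_congr rfl fun e _ => ?_
  rw [coeff_add, add_smul]

def ΨH (k : ℕ) : P6 →+ P2 := AddMonoidHom.mk' (Ψ k) (Ψ_add k)

lemma Ψ_monomial (k : ℕ) (e : Fin 6 →₀ ℕ) (q : ℤ) :
    Ψ k (monomial e q) = q • δ k e := by
  classical
  by_cases hq : q = 0
  · subst hq; simp [Ψ, support_monomial]
  · rw [Ψ, support_monomial, if_neg hq, Finset.sum_singleton, coeff_monomial, if_pos rfl]

lemma Ψ_mul_monomial (k : ℕ) (E : P6) (u : Fin 6 →₀ ℕ) :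
    Ψ k (E * monomial u 1) = ∑ e ∈ E.support, coeff e E • δ k (e + u) := by
  conv_lhs => rw [E.as_sum, Finset.sum_mul]
  rw [show Ψ k = ΨH k from rfl, map_sum]
  refine Finset.sum_congr rfl fun e _ => ?_
  show Ψ k _ = _
  rw [monomial_mul, mul_one, Ψ_monomial]

lemma Ψ_C_mul (k : ℕ) (c : ℤ) (E : P6) : Ψ k (C c * E) = c • Ψ k E := by
  have hs : (C c * E).support ⊆ E.support := by
    intro e he
    rw [mem_support_iff, coeff_C_mul] at he
    exact mem_support_iff.mpr fun h0 => he (by rw [h0, mul_zero])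
  rw [Ψ_eq_sum hs, Ψ, Finset.smul_sum]
  refine Finset.sum_congr rfl fun e _ => ?_
  rw [coeff_C_mul, mul_smul]

def s03 : Fin 6 →₀ ℕ := Finsupp.single 0 1 + Finsupp.single 3 1
def s14 : Fin 6 →₀ ℕ := Finsupp.single 1 1 + Finsupp.single 4 1
def s25 : Fin 6 →₀ ℕ := Finsupp.single 2 1 + Finsupp.single 5 1

lemma Fq_eq : Fq = monomial s03 1 + monomial s14 1 + monomial s25 1 := by
  rw [Fq, s03, s14, s25]
  rw [← pow_one (X 0 : P6), ← pow_one (X 1 : P6), ← pow_one (X 2 : P6),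
      ← pow_one (X 3 : P6), ← pow_one (X 4 : P6), ← pow_one (X 5 : P6)]
  rw [X_pow_eq_monomial, X_pow_eq_monomial, X_pow_eq_monomial, X_pow_eq_monomial,
      X_pow_eq_monomial, X_pow_eq_monomial, monomial_mul, monomial_mul, monomial_mul,
      mul_one]

lemma δ_F (k : ℕ) (e : Fin 6 →₀ ℕ) :
    δ k (e + s03) + δ k (e + s14) + δ k (e + s25) = 0 := by
  classical
  simp +decide only [δ, s03, s14, s25, Finsupp.add_apply, Finsupp.single_apply,
    reduceIte, add_zero]
  by_cases hc : e 3 = e 0 + k ∧ e 4 = e 1 + k ∧ e 5 = e 2 + k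
  · obtain ⟨h1, h2, h3⟩ := hc
    rw [if_pos ⟨by omega, by omega, by omega⟩, if_pos ⟨by omega, by omega, by omega⟩,
        if_pos ⟨by omega, by omega, by omega⟩]
    rw [pow_succ, pow_succ, pow_succ]
    ring
  · rw [if_neg (fun hcond => hc ⟨by omega, by omega, by omega⟩),
        if_neg (fun hcond => hc ⟨by omega, by omega, by omega⟩),
        if_neg (fun hcond => hc ⟨by omega, by omega, by omega⟩)]
    simp

lemma Ψ_mul_F (k : ℕ) (E : P6) : Ψ k (E * Fq) = 0 := by
  rw [Fq_eq, mul_add, mul_add, Ψ_add, Ψ_add, Ψ_mul_monomial, Ψ_mul_monomial,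
      Ψ_mul_monomial, ← Finset.sum_add_distrib, ← Finset.sum_add_distrib]
  refine Finset.sum_eq_zero fun e _ => ?_
  rw [← smul_add, ← smul_add, δ_F, smul_zero]

/-! ### the target monomial in `ℤ[s,t]` -/

def τ (p : ℕ) : Fin 2 →₀ ℕ := Finsupp.single 0 1 + Finsupp.single 1 (p - 1)

lemma τ_apply0 (p : ℕ) : τ p 0 = 1 := by
  simp +decide [τ, Finsupp.add_apply, Finsupp.single_apply]

lemma τ_apply1 (p : ℕ) : τ p 1 = p - 1 := by
  simp +decide [τ, Finsupp.add_apply, Finsupp.single_apply]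

lemma deg2 (d : Fin 2 →₀ ℕ) : d.degree = d 0 + d 1 := by
  rw [Finsupp.degree_apply,
    Finset.sum_subset (Finset.subset_univ d.support)
      (fun i _ hi => Finsupp.notMem_support_iff.mp hi)]
  exact Fin.sum_univ_two d
lemma homδ (a b c : ℕ) :
    IsHomogeneous ((X 0 : P2) ^ a * X 1 ^ b * (- X 0 - X 1) ^ c) (a + b + c) := by
  have h1 : IsHomogeneous (- X 0 - X 1 : P2) 1 := by
    rw [show (- X 0 - X 1 : P2) = -(X 0 + X 1) by ring]
    exact ((isHomogeneous_X _ _).add (isHomogeneous_X _ _)).neg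
  have h2 : IsHomogeneous ((- X 0 - X 1 : P2) ^ c) c := by simpa using h1.pow c
  exact ((isHomogeneous_X_pow _ _).mul (isHomogeneous_X_pow _ _)).mul h2

lemma degτ (p : ℕ) (hp : 1 ≤ p) : (τ p).degree = p := by
  rw [deg2, τ_apply0, τ_apply1]; omega

lemma coeff_τ_ne {p : ℕ} (hp : 1 ≤ p) {a b c : ℕ} (hne : a + b + c ≠ p) :
    coeff (τ p) ((X 0 : P2) ^ a * X 1 ^ b * (- X 0 - X 1) ^ c) = 0 :=
  (homδ a b c).coeff_eq_zero (by rw [degτ p hp]; omega)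

lemma coeff_τ_sp {p : ℕ} (hp : 2 ≤ p) : coeff (τ p) ((X 0 : P2) ^ p) = 0 := by
  classical
  rw [coeff_X_pow, if_neg]
  intro h
  have := DFunLike.congr_fun h 1
  rw [τ_apply1] at this
  simp +decide [Finsupp.single_apply] at this
  omega

lemma coeff_τ_tp {p : ℕ} (hp : 2 ≤ p) : coeff (τ p) ((X 1 : P2) ^ p) = 0 := by
  classical
  rw [coeff_X_pow, if_neg]
  intro h
  have := DFunLike.congr_fun h 0
  rw [τ_apply0] at this
  simp +decide [Finsupp.single_apply] at this

lemma coeff_τ_binom {p : ℕ} (hp : 1 ≤ p) :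
    coeff (τ p) ((X 0 + X 1 : P2) ^ p) = (p : ℤ) := by
  classical
  rw [add_pow, coeff_sum]
  rw [Finset.sum_eq_single 1]
  · rw [X_pow_eq_monomial, X_pow_eq_monomial, monomial_mul, mul_one,
        ← C_eq_coe_nat, mul_comm, C_mul_monomial, mul_one, coeff_monomial, τ, if_pos rfl,
        Nat.choose_one_right]
  · intro m _ hne
    rw [X_pow_eq_monomial, X_pow_eq_monomial, monomial_mul, mul_one,
        ← C_eq_coe_nat, mul_comm, C_mul_monomial, mul_one, coeff_monomial, if_neg]
    intro h
    have := DFunLike.congr_fun h 0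
    rw [τ_apply0] at this
    simp +decide [Finsupp.add_apply, Finsupp.single_apply] at this
    exact hne this
  · intro h
    exact absurd (Finset.mem_range.mpr (by omega)) h

lemma coeff_τ_rp {p : ℕ} (hp : 1 ≤ p) :
    coeff (τ p) ((- X 0 - X 1 : P2) ^ p) = (-1 : ℤ) ^ p * p := by
  rw [show (- X 0 - X 1 : P2) = -(X 0 + X 1) by ring, neg_pow]
  rw [show ((-1 : P2)) ^ p = C ((-1 : ℤ) ^ p) by rw [map_pow, map_neg, map_one]]
  rw [coeff_C_mul, coeff_τ_binom hp]

lemma coeff_τ_s {p : ℕ} (hp : 2 ≤ p) {a b c : ℕ} (ha : p ≤ a) :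
    coeff (τ p) ((X 0 : P2) ^ a * X 1 ^ b * (- X 0 - X 1) ^ c) = 0 := by
  by_cases h : a + b + c = p
  · have hb : b = 0 := by omega
    have hc : c = 0 := by omega
    have haa : a = p := by omega
    have e1 : (X 0 : P2) ^ a * X 1 ^ b * (- X 0 - X 1) ^ c = (X 0 : P2) ^ p := by
      rw [hb, hc, haa]; ring
    rw [e1]; exact coeff_τ_sp hp
  · exact coeff_τ_ne (by omega) h

lemma coeff_τ_t {p : ℕ} (hp : 2 ≤ p) {a b c : ℕ} (hb : p ≤ b) :
    coeff (τ p) ((X 0 : P2) ^ a * X 1 ^ b * (- X 0 - X 1) ^ c) = 0 := by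
  by_cases h : a + b + c = p
  · have ha : a = 0 := by omega
    have hc : c = 0 := by omega
    have hbb : b = p := by omega
    have e1 : (X 0 : P2) ^ a * X 1 ^ b * (- X 0 - X 1) ^ c = (X 1 : P2) ^ p := by
      rw [ha, hc, hbb]; ring
    rw [e1]; exact coeff_τ_tp hp
  · exact coeff_τ_ne (by omega) h

lemma coeff_τ_r {p : ℕ} (hp : 2 ≤ p) {a b c : ℕ} (hc : p ≤ c) :
    (p : ℤ) ∣ coeff (τ p) ((X 0 : P2) ^ a * X 1 ^ b * (- X 0 - X 1) ^ c) := by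
  by_cases h : a + b + c = p
  · have ha : a = 0 := by omega
    have hb : b = 0 := by omega
    have hcc : c = p := by omega
    have e1 : (X 0 : P2) ^ a * X 1 ^ b * (- X 0 - X 1) ^ c = (- X 0 - X 1 : P2) ^ p := by
      rw [ha, hb, hcc]; ring
    rw [e1, coeff_τ_rp (by omega)]
    exact dvd_mul_left _ _
  · rw [coeff_τ_ne (by omega) h]
    exact dvd_zero _


/-! ### values of `Ψ` on the relevant monomials -/

lemma Ψ_axp (p k : ℕ) : Ψ k ((X 0 * X 3 : P6) ^ p * (X 3 * X 4 * X 5) ^ k) = (X 0 : P2) ^ p := by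
  have hmono : (X 0 * X 3 : P6) ^ p * (X 3 * X 4 * X 5) ^ k =
      monomial (Finsupp.single 0 p + Finsupp.single 3 (p + k) + Finsupp.single 4 k +
        Finsupp.single 5 k) 1 := by
    simp only [mul_pow, X_pow_eq_monomial, monomial_mul, mul_one, one_mul]
    congr 1
    rw [Finsupp.single_add]
    abel_nf
  rw [hmono, Ψ_monomial, one_smul]
  set u : Fin 6 →₀ ℕ := Finsupp.single 0 p + Finsupp.single 3 (p + k) + Finsupp.single 4 k +
    Finsupp.single 5 k with hu
  have h0 : u 0 = p := by
    simp +decide only [hu, Finsupp.add_apply, Finsupp.single_apply, reduceIte, add_zero, zero_add]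
  have h1 : u 1 = 0 := by
    simp +decide only [hu, Finsupp.add_apply, Finsupp.single_apply, reduceIte, add_zero, zero_add]
  have h2 : u 2 = 0 := by
    simp +decide only [hu, Finsupp.add_apply, Finsupp.single_apply, reduceIte, add_zero, zero_add]
  have h3 : u 3 = p + k := by
    simp +decide only [hu, Finsupp.add_apply, Finsupp.single_apply, reduceIte, add_zero, zero_add]
  have h4 : u 4 = k := by
    simp +decide only [hu, Finsupp.add_apply, Finsupp.single_apply, reduceIte, add_zero, zero_add]
  have h5 : u 5 = k := by
    simp +decide only [hu, Finsupp.add_apply, Finsupp.single_apply, reduceIte, add_zero, zero_add]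
  rw [δ, if_pos ⟨by omega, by omega, by omega⟩, h0, h1, h2, pow_zero, pow_zero, mul_one,
    mul_one]

lemma Ψ_byp (p k : ℕ) : Ψ k ((X 1 * X 4 : P6) ^ p * (X 3 * X 4 * X 5) ^ k) = (X 1 : P2) ^ p := by
  have hmono : (X 1 * X 4 : P6) ^ p * (X 3 * X 4 * X 5) ^ k =
      monomial (Finsupp.single 1 p + Finsupp.single 3 k + Finsupp.single 4 (p + k) +
        Finsupp.single 5 k) 1 := by
    simp only [mul_pow, X_pow_eq_monomial, monomial_mul, mul_one, one_mul]
    congr 1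
    rw [Finsupp.single_add]
    abel_nf
  rw [hmono, Ψ_monomial, one_smul]
  set u : Fin 6 →₀ ℕ := Finsupp.single 1 p + Finsupp.single 3 k + Finsupp.single 4 (p + k) +
    Finsupp.single 5 k with hu
  have h0 : u 0 = 0 := by
    simp +decide only [hu, Finsupp.add_apply, Finsupp.single_apply, reduceIte, add_zero, zero_add]
  have h1 : u 1 = p := by
    simp +decide only [hu, Finsupp.add_apply, Finsupp.single_apply, reduceIte, add_zero, zero_add]
  have h2 : u 2 = 0 := by
    simp +decide only [hu, Finsupp.add_apply, Finsupp.single_apply, reduceIte, add_zero, zero_add]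
  have h3 : u 3 = k := by
    simp +decide only [hu, Finsupp.add_apply, Finsupp.single_apply, reduceIte, add_zero, zero_add]
  have h4 : u 4 = p + k := by
    simp +decide only [hu, Finsupp.add_apply, Finsupp.single_apply, reduceIte, add_zero, zero_add]
  have h5 : u 5 = k := by
    simp +decide only [hu, Finsupp.add_apply, Finsupp.single_apply, reduceIte, add_zero, zero_add]
  rw [δ, if_pos ⟨by omega, by omega, by omega⟩, h0, h1, h2, pow_zero, pow_zero, one_mul,
    mul_one]

lemma Ψ_czp (p k : ℕ) : Ψ k ((X 2 * X 5 : P6) ^ p * (X 3 * X 4 * X 5) ^ k) =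
    (- X 0 - X 1 : P2) ^ p := by
  have hmono : (X 2 * X 5 : P6) ^ p * (X 3 * X 4 * X 5) ^ k =
      monomial (Finsupp.single 2 p + Finsupp.single 3 k + Finsupp.single 4 k +
        Finsupp.single 5 (p + k)) 1 := by
    simp only [mul_pow, X_pow_eq_monomial, monomial_mul, mul_one, one_mul]
    congr 1
    rw [Finsupp.single_add]
    abel_nf
  rw [hmono, Ψ_monomial, one_smul]
  set u : Fin 6 →₀ ℕ := Finsupp.single 2 p + Finsupp.single 3 k + Finsupp.single 4 k +
    Finsupp.single 5 (p + k) with hu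
  have h0 : u 0 = 0 := by
    simp +decide only [hu, Finsupp.add_apply, Finsupp.single_apply, reduceIte, add_zero, zero_add]
  have h1 : u 1 = 0 := by
    simp +decide only [hu, Finsupp.add_apply, Finsupp.single_apply, reduceIte, add_zero, zero_add]
  have h2 : u 2 = p := by
    simp +decide only [hu, Finsupp.add_apply, Finsupp.single_apply, reduceIte, add_zero, zero_add]
  have h3 : u 3 = k := by
    simp +decide only [hu, Finsupp.add_apply, Finsupp.single_apply, reduceIte, add_zero, zero_add]
  have h4 : u 4 = k := by
    simp +decide only [hu, Finsupp.add_apply, Finsupp.single_apply, reduceIte, add_zero, zero_add]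
  have h5 : u 5 = p + k := by
    simp +decide only [hu, Finsupp.add_apply, Finsupp.single_apply, reduceIte, add_zero, zero_add]
  rw [δ, if_pos ⟨by omega, by omega, by omega⟩, h0, h1, h2, pow_zero, pow_zero, one_mul,
    one_mul]

/-! ### coefficients of `Ψ` of multiples of the ideal generators -/

lemma coeff_Ψ_x3 {p : ℕ} (hp2 : 2 ≤ p) (k : ℕ) (A : P6) :
    coeff (τ p) (Ψ k (A * X 3 ^ (p + k))) = 0 := by
  rw [X_pow_eq_monomial, Ψ_mul_monomial, coeff_sum]
  refine Finset.sum_eq_zero fun e _ => ?_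
  rw [coeff_smul, smul_eq_mul, δ]
  have h0 : ((e + Finsupp.single 3 (p + k) : Fin 6 →₀ ℕ)) 0 = e 0 := by
    simp +decide only [Finsupp.add_apply, Finsupp.single_apply, reduceIte, add_zero]
  have h1 : ((e + Finsupp.single 3 (p + k) : Fin 6 →₀ ℕ)) 1 = e 1 := by
    simp +decide only [Finsupp.add_apply, Finsupp.single_apply, reduceIte, add_zero]
  have h2 : ((e + Finsupp.single 3 (p + k) : Fin 6 →₀ ℕ)) 2 = e 2 := by
    simp +decide only [Finsupp.add_apply, Finsupp.single_apply, reduceIte, add_zero]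
  have h3 : ((e + Finsupp.single 3 (p + k) : Fin 6 →₀ ℕ)) 3 = e 3 + (p + k) := by
    simp +decide only [Finsupp.add_apply, Finsupp.single_apply, reduceIte, add_zero]
  split_ifs with hcond
  · rw [h0, h1, h2]
    rw [h0, h3] at hcond
    exact mul_eq_zero_of_right _ (coeff_τ_s hp2 (by omega))
  · rw [coeff_zero, mul_zero]

lemma coeff_Ψ_x4 {p : ℕ} (hp2 : 2 ≤ p) (k : ℕ) (A : P6) :
    coeff (τ p) (Ψ k (A * X 4 ^ (p + k))) = 0 := by
  rw [X_pow_eq_monomial, Ψ_mul_monomial, coeff_sum]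
  refine Finset.sum_eq_zero fun e _ => ?_
  rw [coeff_smul, smul_eq_mul, δ]
  have h0 : ((e + Finsupp.single 4 (p + k) : Fin 6 →₀ ℕ)) 0 = e 0 := by
    simp +decide only [Finsupp.add_apply, Finsupp.single_apply, reduceIte, add_zero]
  have h1 : ((e + Finsupp.single 4 (p + k) : Fin 6 →₀ ℕ)) 1 = e 1 := by
    simp +decide only [Finsupp.add_apply, Finsupp.single_apply, reduceIte, add_zero]
  have h2 : ((e + Finsupp.single 4 (p + k) : Fin 6 →₀ ℕ)) 2 = e 2 := by
    simp +decide only [Finsupp.add_apply, Finsupp.single_apply, reduceIte, add_zero]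
  have h4 : ((e + Finsupp.single 4 (p + k) : Fin 6 →₀ ℕ)) 4 = e 4 + (p + k) := by
    simp +decide only [Finsupp.add_apply, Finsupp.single_apply, reduceIte, add_zero]
  split_ifs with hcond
  · rw [h0, h1, h2]
    rw [h1, h4] at hcond
    exact mul_eq_zero_of_right _ (coeff_τ_t hp2 (by omega))
  · rw [coeff_zero, mul_zero]

lemma coeff_Ψ_x5 {p : ℕ} (hp2 : 2 ≤ p) (k : ℕ) (A : P6) :
    (p : ℤ) ∣ coeff (τ p) (Ψ k (A * X 5 ^ (p + k))) := by
  rw [X_pow_eq_monomial, Ψ_mul_monomial, coeff_sum]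
  refine Finset.dvd_sum fun e _ => ?_
  rw [coeff_smul, smul_eq_mul, δ]
  have h0 : ((e + Finsupp.single 5 (p + k) : Fin 6 →₀ ℕ)) 0 = e 0 := by
    simp +decide only [Finsupp.add_apply, Finsupp.single_apply, reduceIte, add_zero]
  have h1 : ((e + Finsupp.single 5 (p + k) : Fin 6 →₀ ℕ)) 1 = e 1 := by
    simp +decide only [Finsupp.add_apply, Finsupp.single_apply, reduceIte, add_zero]
  have h2 : ((e + Finsupp.single 5 (p + k) : Fin 6 →₀ ℕ)) 2 = e 2 := by
    simp +decide only [Finsupp.add_apply, Finsupp.single_apply, reduceIte, add_zero]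
  have h5 : ((e + Finsupp.single 5 (p + k) : Fin 6 →₀ ℕ)) 5 = e 5 + (p + k) := by
    simp +decide only [Finsupp.add_apply, Finsupp.single_apply, reduceIte, add_zero]
  split_ifs with hcond
  · rw [h0, h1, h2]
    rw [h2, h5] at hcond
    exact Dvd.dvd.mul_left (coeff_τ_r hp2 (by omega)) _
  · rw [coeff_zero, mul_zero]
    exact dvd_zero _

/-! ### the main contradiction -/

theorem main_aux (p k : ℕ) (hp : p.Prime) (G A₁ B₁ C₁ D₁ D₀ : P6)
    (hD0 : MvPolynomial.C (p : ℤ) * G -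
      ((X 0 * X 3 : P6) ^ p + (X 1 * X 4) ^ p + (X 2 * X 5) ^ p) = D₀ * Fq)
    (hD : G * (X 3 * X 4 * X 5 : P6) ^ k -
      (A₁ * X 3 ^ (p + k) + B₁ * X 4 ^ (p + k) + C₁ * X 5 ^ (p + k)) = D₁ * Fq) : False := by
  have hp2 : 2 ≤ p := hp.two_le
  set M : P6 := (X 3 * X 4 * X 5 : P6) ^ k with hMdef
  set c0 : ℤ := coeff (τ p) (Ψ k (G * M)) with hc0
  have key1 : MvPolynomial.C (p : ℤ) * (G * M) =
      (X 0 * X 3 : P6) ^ p * M + ((X 1 * X 4 : P6) ^ p * M +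
        ((X 2 * X 5 : P6) ^ p * M + (D₀ * M) * Fq)) := by
    rw [hMdef]; linear_combination ((X 3 * X 4 * X 5 : P6) ^ k) * hD0
  have e1 : (p : ℤ) * c0 = (-1 : ℤ) ^ p * p := by
    have hh := congrArg (fun Q => coeff (τ p) (Ψ k Q)) key1
    rw [Ψ_C_mul, Ψ_add, Ψ_add, Ψ_add, Ψ_mul_F, add_zero, hMdef, Ψ_axp, Ψ_byp, Ψ_czp,
      coeff_smul, smul_eq_mul, coeff_add, coeff_add, coeff_τ_sp hp2, coeff_τ_tp hp2,
      coeff_τ_rp (by omega)] at hh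
    rw [hc0, hMdef]
    simpa using hh
  have key2 : G * M = A₁ * X 3 ^ (p + k) + (B₁ * X 4 ^ (p + k) +
      (C₁ * X 5 ^ (p + k) + D₁ * Fq)) := by
    rw [hMdef]; linear_combination hD
  have e2 : (p : ℤ) ∣ c0 := by
    have hh := congrArg (fun Q => coeff (τ p) (Ψ k Q)) key2
    rw [Ψ_add, Ψ_add, Ψ_add, Ψ_mul_F, add_zero, coeff_add, coeff_add,
      coeff_Ψ_x3 hp2, coeff_Ψ_x4 hp2, zero_add, zero_add] at hh
    rw [hc0, hh]
    exact coeff_Ψ_x5 hp2 k C₁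
  obtain ⟨d, hd⟩ := e2
  rw [hd, show (-1 : ℤ) ^ p * (p : ℤ) = (p : ℤ) * ((-1 : ℤ) ^ p) by ring] at e1
  have hpne : (p : ℤ) ≠ 0 := Int.natCast_ne_zero.mpr hp.ne_zero
  have e3 : (p : ℤ) * d = (-1 : ℤ) ^ p := mul_left_cancel₀ hpne (by linarith [e1])
  have e4 : ((p : ℤ) * d).natAbs = 1 := by
    rw [e3, Int.natAbs_pow]
    simp
  rw [Int.natAbs_mul, Int.natAbs_natCast] at e4
  have : p ∣ 1 := ⟨d.natAbs, e4.symm⟩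
  have := Nat.le_of_dvd one_pos this
  omega

end

end SinghAux

theorem lambda_mul_not_mem (p : ℕ) (hp : p.Prime) (lam : HypR)
    (hlam : (p : HypR) * lam = (hu * hx) ^ p + (hv * hy) ^ p + (hw * hz) ^ p) (k : ℕ) :
    lam * (hx * hy * hz) ^ k ∉
      Ideal.span {hx ^ (p + k), hy ^ (p + k), hz ^ (p + k)} := by
  intro hmem
  classical
  obtain ⟨G, hG⟩ := Ideal.Quotient.mk_surjective (I := SinghAux.Iq) lam
  -- first relation: C p * G - sum of p-th powers is a multiple of Fq
  have hmem1 : MvPolynomial.C (p : ℤ) * G -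
      ((X 0 * X 3 : SinghAux.P6) ^ p + (X 1 * X 4) ^ p + (X 2 * X 5) ^ p) ∈ SinghAux.Iq := by
    rw [← Ideal.Quotient.eq_zero_iff_mem, map_sub, map_mul, map_add, map_add, map_pow,
      map_pow, map_pow, map_mul, map_mul, map_mul, MvPolynomial.C_eq_coe_nat, map_natCast, hG]
    show (p : HypR) * lam - ((hu * hx) ^ p + (hv * hy) ^ p + (hw * hz) ^ p) = 0
    rw [hlam, sub_self]
  obtain ⟨D₀, hD0⟩ := Ideal.mem_span_singleton'.mp hmem1
  -- second relation, from the assumed ideal membership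
  have hkey : lam * (hx * hy * hz) ^ k =
      Ideal.Quotient.mk SinghAux.Iq (G * (X 3 * X 4 * X 5 : SinghAux.P6) ^ k) := by
    rw [map_mul, map_pow, map_mul, map_mul, hG]
    rfl
  have hsx : hx ^ (p + k) = Ideal.Quotient.mk SinghAux.Iq ((X 3 : SinghAux.P6) ^ (p + k)) :=
    (map_pow (Ideal.Quotient.mk SinghAux.Iq) (X 3) (p + k)).symm
  have hsy : hy ^ (p + k) = Ideal.Quotient.mk SinghAux.Iq ((X 4 : SinghAux.P6) ^ (p + k)) :=
    (map_pow (Ideal.Quotient.mk SinghAux.Iq) (X 4) (p + k)).symm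
  have hsz : hz ^ (p + k) = Ideal.Quotient.mk SinghAux.Iq ((X 5 : SinghAux.P6) ^ (p + k)) :=
    (map_pow (Ideal.Quotient.mk SinghAux.Iq) (X 5) (p + k)).symm
  rw [hkey, hsx, hsy, hsz] at hmem
  replace hmem := Ideal.mem_span_insert.mp hmem
  obtain ⟨a1, z1, hz1, hEq1⟩ := hmem
  replace hz1 := Ideal.mem_span_insert.mp hz1
  obtain ⟨a2, z2, hz2, hEq2⟩ := hz1
  replace hz2 := Ideal.mem_span_singleton.mp hz2
  obtain ⟨a3, hz3⟩ := hz2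
  obtain ⟨A₁, hA1⟩ := Ideal.Quotient.mk_surjective (I := SinghAux.Iq) a1
  obtain ⟨B₁, hB1⟩ := Ideal.Quotient.mk_surjective (I := SinghAux.Iq) a2
  obtain ⟨C₁, hC1⟩ := Ideal.Quotient.mk_surjective (I := SinghAux.Iq) a3
  have hmem3 : G * (X 3 * X 4 * X 5 : SinghAux.P6) ^ k -
      (A₁ * X 3 ^ (p + k) + B₁ * X 4 ^ (p + k) + C₁ * X 5 ^ (p + k)) ∈ SinghAux.Iq := by
    rw [← Ideal.Quotient.eq_zero_iff_mem]
    simp only [map_mul, map_pow] at hEq1 hEq2 hz3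
    simp only [map_sub, map_add, map_mul, map_pow, hA1, hB1, hC1]
    rw [hEq1, hEq2, hz3]
    exact sub_eq_zero.mpr ((add_assoc _ _ _).symm.trans (congrArg (HAdd.hAdd _) (mul_comm _ _)))
  obtain ⟨D₁, hD1⟩ := Ideal.mem_span_singleton'.mp hmem3
  exact SinghAux.main_aux p k hp G A₁ B₁ C₁ D₁ D₀ hD0.symm hD1.symm
end

section
/- Let R = ℤ[U,V,W,X,Y,Z]/(UX + VY + WZ) and p a prime. With λ = ((ux)^p + (vy)^p + (wz)^p)/p ∈ R and any k ∈ ℕ, λ·(xyz)^k lies in the ideal (x^{p+k}, y^{p+k}, z^{p+k})R if and only if λ lies in the ideal ((ux)^p, (vy)^p, (wz)^p)R. -/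
set_option maxHeartbeats 1000000
set_option synthInstance.maxHeartbeats 400000

open MvPolynomial

/-! ### Auxiliary setup: the polynomial ring, the defining equation, and an ℕ⁴-grading -/

noncomputable section Aux

abbrev P6 : Type := MvPolynomial (Fin 6) ℤ

def fpoly : P6 := X 0 * X 3 + X 1 * X 4 + X 2 * X 5

def w6 : Fin 6 → Fin 4 → ℕ := fun i =>
  if i = 0 then ![0,1,1,1] else if i = 1 then ![1,0,1,1] else if i = 2 then ![1,1,0,1]
  else if i = 3 then ![1,0,0,0] else if i = 4 then ![0,1,0,0] else ![0,0,1,0]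

lemma weight_w6 (m : Fin 6 →₀ ℕ) :
    Finsupp.weight w6 m =
      ![m 1 + m 2 + m 3, m 0 + m 2 + m 4, m 0 + m 1 + m 5, m 0 + m 1 + m 2] := by
  have h : Finsupp.weight w6 m = ∑ i : Fin 6, m i • w6 i := by
    rw [Finsupp.weight_apply, Finsupp.sum_fintype]
    intro i; exact zero_smul _ _
  funext j
  have h2 := congrFun h j
  rw [Finset.sum_apply, Fin.sum_univ_six] at h2
  simp only [Pi.smul_apply, smul_eq_mul] at h2
  rw [h2]
  fin_cases j <;> simp [w6]

local notation "π" => weightedHomogeneousComponent w6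



lemma comp_mul_hom (q m : P6) (d e : Fin 4 → ℕ)
    (hm : IsWeightedHomogeneous w6 m e) :
    π (d + e) (q * m) = π d q * m := by
  classical
  have hfin := weightedHomogeneousComponent_finsupp (w := w6) q
  set S := hfin.toFinset with hS
  have hq : ∑ i ∈ S, π i q = q := by
    rw [← finsum_eq_sum _ hfin]
    exact sum_weightedHomogeneousComponent w6 q
  have key : ∀ i : Fin 4 → ℕ, π (d + e) (π i q * m) =
      if i = d then π d q * m else 0 := by
    intro i
    have hhom : IsWeightedHomogeneous w6 (π i q * m) (i + e) :=
      (weightedHomogeneousComponent_isWeightedHomogeneous i q).mul hm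
    by_cases hid : i = d
    · subst hid
      rw [if_pos rfl]
      exact hhom.weightedHomogeneousComponent_same
    · rw [if_neg hid]
      exact hhom.weightedHomogeneousComponent_ne (d + e)
        (fun hc => hid (add_right_cancel hc).symm)
  calc π (d + e) (q * m) = π (d + e) (∑ i ∈ S, π i q * m) := by
        rw [← Finset.sum_mul, hq]
    _ = ∑ i ∈ S, π (d + e) (π i q * m) := map_sum _ _ _
    _ = π d q * m := by
        rw [Finset.sum_congr rfl (fun i _ => key i)]
        rw [Finset.sum_ite_eq' S d (fun _ => π d q * m)]
        by_cases hd : d ∈ S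
        · rw [if_pos hd]
        · rw [if_neg hd]
          have : π d q = 0 := by
            by_contra hne
            exact hd (hfin.mem_toFinset.mpr hne)
          rw [this, zero_mul]

lemma comp_eq_monomial (a : P6) (A : Fin 4 → ℕ) (d₀ : Fin 6 →₀ ℕ)
    (h₀ : Finsupp.weight w6 d₀ = A)
    (huniq : ∀ m : Fin 6 →₀ ℕ, Finsupp.weight w6 m = A → m = d₀) :
    π A a = monomial d₀ (coeff d₀ a) := by
  classical
  ext m
  rw [coeff_weightedHomogeneousComponent, coeff_monomial]
  by_cases hm : Finsupp.weight w6 m = A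
  · have := huniq m hm
    subst this
    rw [if_pos hm, if_pos rfl]
  · rw [if_neg hm, if_neg]
    intro hc
    exact hm (hc ▸ h₀)


lemma prime_X_mv {n : ℕ} (i : Fin (n + 1)) :
    Prime (X i : MvPolynomial (Fin (n + 1)) ℤ) := by
  rw [← MulEquiv.prime_iff ((renameEquiv ℤ (Equiv.swap i 0)).trans (finSuccEquiv ℤ n)).toMulEquiv]
  have : ((renameEquiv ℤ (Equiv.swap i 0)).trans (finSuccEquiv ℤ n)).toMulEquiv (X i)
      = Polynomial.X := by
    show (finSuccEquiv ℤ n) ((renameEquiv ℤ (Equiv.swap i 0)) (X i)) = Polynomial.X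
    rw [renameEquiv_apply, rename_X, Equiv.swap_apply_left, finSuccEquiv_X_zero]
  rw [this]
  exact Polynomial.prime_X

open Polynomial in
lemma fpoly_prime : Prime fpoly := by
  rw [← MulEquiv.prime_iff (MvPolynomial.finSuccEquiv ℤ 5).toMulEquiv]
  have himg : (MvPolynomial.finSuccEquiv ℤ 5).toMulEquiv fpoly =
      Polynomial.C (X 2) * Polynomial.X +
        Polynomial.C (X 0 * X 3 + X 1 * X 4 : MvPolynomial (Fin 5) ℤ) := by
    show (MvPolynomial.finSuccEquiv ℤ 5) fpoly = _
    have e0 : (X 0 : P6) * X 3 = X (0 : Fin 6) * X (Fin.succ 2) := rfl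
    have e1 : (X 1 : P6) * X 4 = X (Fin.succ 0) * X (Fin.succ 3) := rfl
    have e2 : (X 2 : P6) * X 5 = X (Fin.succ 1) * X (Fin.succ 4) := rfl
    rw [fpoly, map_add, map_add, e0, e1, e2, map_mul, map_mul, map_mul,
      MvPolynomial.finSuccEquiv_X_zero, MvPolynomial.finSuccEquiv_X_succ,
      MvPolynomial.finSuccEquiv_X_succ, MvPolynomial.finSuccEquiv_X_succ,
      MvPolynomial.finSuccEquiv_X_succ, MvPolynomial.finSuccEquiv_X_succ]
    push_cast [map_mul, map_add]
    ring
  rw [himg]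
  set S := MvPolynomial (Fin 5) ℤ
  set q : S[X] := Polynomial.C (X 2) * Polynomial.X +
      Polynomial.C (X 0 * X 3 + X 1 * X 4 : S) with hq
  have hprim : q.IsPrimitive := by
    intro r hr
    obtain ⟨t, ht⟩ := hr
    have h1 : r ∣ (X 2 : S) := by
      refine ⟨t.coeff 1, ?_⟩
      have := congrArg (fun P : S[X] => P.coeff 1) ht
      simpa [hq, Polynomial.coeff_C] using this
    have h0 : r ∣ (X 0 * X 3 + X 1 * X 4 : S) := by
      refine ⟨t.coeff 0, ?_⟩
      have := congrArg (fun P : S[X] => P.coeff 0) ht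
      simpa [hq, Polynomial.coeff_C] using this
    obtain ⟨s, hs⟩ := h1
    rcases ((prime_X_mv (2 : Fin 5)).irreducible.isUnit_or_isUnit hs) with hur | hus
    · exact hur
    · exfalso
      obtain ⟨u, rfl⟩ := hus
      have hX2r : (X 2 : S) ∣ r := by
        refine ⟨(u⁻¹ : (MvPolynomial (Fin 5) ℤ)ˣ), ?_⟩
        rw [hs]
        rw [mul_assoc]
        simp
      have hX2B : (X 2 : S) ∣ (X 0 * X 3 + X 1 * X 4 : S) := hX2r.trans h0
      obtain ⟨t2, ht2⟩ := hX2B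
      have := congrArg (MvPolynomial.eval (fun i : Fin 5 => if i = 2 then 0 else 1)) ht2
      simp at this
  have hinj := IsFractionRing.injective S (FractionRing S)
  apply UniqueFactorizationMonoid.irreducible_iff_prime.mp
  apply hprim.irreducible_of_irreducible_map_of_injective hinj
  apply Polynomial.irreducible_of_degree_eq_one
  rw [Polynomial.map_add, Polynomial.map_mul, Polynomial.map_C, Polynomial.map_C,
    Polynomial.map_X]
  apply Polynomial.degree_linear
  exact (map_ne_zero_iff _ hinj).mpr (MvPolynomial.X_ne_zero _)
lemma fpoly_not_dvd_xyz (k : ℕ) : ¬ fpoly ∣ (X 3 * X 4 * X 5 : P6) ^ k := by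
  rintro ⟨t, ht⟩
  have := congrArg (MvPolynomial.eval (fun i : Fin 6 => if i = 0 then 0 else if i = 1 then 0 else if i = 2 then 0 else 1)) ht
  simp [fpoly] at this

lemma fpoly_not_dvd_nat (p : ℕ) (hp : p ≠ 0) : ¬ fpoly ∣ (p : P6) := by
  rintro ⟨t, ht⟩
  have := congrArg (MvPolynomial.eval (fun _ : Fin 6 => (0 : ℤ))) ht
  simp [fpoly] at this
  exact hp this

-- monomial forms
lemma mon_xyz (k : ℕ) : ((X 3 * X 4 * X 5 : P6)) ^ k =
    monomial (Finsupp.single 3 k + Finsupp.single 4 k + Finsupp.single 5 k) 1 := by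
  rw [mul_pow, mul_pow, X_pow_eq_monomial, X_pow_eq_monomial, X_pow_eq_monomial,
    monomial_mul, monomial_mul, mul_one, mul_one]

lemma mon_ux (p : ℕ) : ((X 0 * X 3 : P6)) ^ p =
    monomial (Finsupp.single 0 p + Finsupp.single 3 p) 1 := by
  rw [mul_pow, X_pow_eq_monomial, X_pow_eq_monomial, monomial_mul, mul_one]

lemma mon_vy (p : ℕ) : ((X 1 * X 4 : P6)) ^ p =
    monomial (Finsupp.single 1 p + Finsupp.single 4 p) 1 := by
  rw [mul_pow, X_pow_eq_monomial, X_pow_eq_monomial, monomial_mul, mul_one]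

lemma mon_wz (p : ℕ) : ((X 2 * X 5 : P6)) ^ p =
    monomial (Finsupp.single 2 p + Finsupp.single 5 p) 1 := by
  rw [mul_pow, X_pow_eq_monomial, X_pow_eq_monomial, monomial_mul, mul_one]

-- weighted homogeneity
lemma wh_xyz (k : ℕ) : IsWeightedHomogeneous w6 ((X 3 * X 4 * X 5 : P6) ^ k) ![k,k,k,0] := by
  rw [mon_xyz]
  apply isWeightedHomogeneous_monomial
  rw [weight_w6]
  funext j
  fin_cases j <;> simp [Finsupp.single_apply]

lemma wh_x (n : ℕ) : IsWeightedHomogeneous w6 ((X 3 : P6) ^ n) ![n,0,0,0] := by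
  rw [X_pow_eq_monomial]
  apply isWeightedHomogeneous_monomial
  rw [weight_w6]
  funext j
  fin_cases j <;> simp [Finsupp.single_apply]

lemma wh_y (n : ℕ) : IsWeightedHomogeneous w6 ((X 4 : P6) ^ n) ![0,n,0,0] := by
  rw [X_pow_eq_monomial]
  apply isWeightedHomogeneous_monomial
  rw [weight_w6]
  funext j
  fin_cases j <;> simp [Finsupp.single_apply]

lemma wh_z (n : ℕ) : IsWeightedHomogeneous w6 ((X 5 : P6) ^ n) ![0,0,n,0] := by
  rw [X_pow_eq_monomial]
  apply isWeightedHomogeneous_monomial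
  rw [weight_w6]
  funext j
  fin_cases j <;> simp [Finsupp.single_apply]

lemma wh_f : IsWeightedHomogeneous w6 fpoly ![1,1,1,1] := by
  have h1 : ((X 0 : P6) * X 3) = monomial (Finsupp.single 0 1 + Finsupp.single 3 1) 1 := by
    simpa using mon_ux 1
  have h2 : ((X 1 : P6) * X 4) = monomial (Finsupp.single 1 1 + Finsupp.single 4 1) 1 := by
    simpa using mon_vy 1
  have h3 : ((X 2 : P6) * X 5) = monomial (Finsupp.single 2 1 + Finsupp.single 5 1) 1 := by
    simpa using mon_wz 1
  rw [fpoly, h1, h2, h3]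
  apply IsWeightedHomogeneous.add
  apply IsWeightedHomogeneous.add
  all_goals {
    apply isWeightedHomogeneous_monomial
    rw [weight_w6]
    funext j
    fin_cases j <;> simp [Finsupp.single_apply]
  }

lemma wh_ux (p : ℕ) : IsWeightedHomogeneous w6 ((X 0 * X 3 : P6) ^ p) (fun _ => p) := by
  rw [mon_ux]
  apply isWeightedHomogeneous_monomial
  rw [weight_w6]
  funext j
  fin_cases j <;> simp [Finsupp.single_apply]

lemma wh_vy (p : ℕ) : IsWeightedHomogeneous w6 ((X 1 * X 4 : P6) ^ p) (fun _ => p) := by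
  rw [mon_vy]
  apply isWeightedHomogeneous_monomial
  rw [weight_w6]
  funext j
  fin_cases j <;> simp [Finsupp.single_apply]

lemma wh_wz (p : ℕ) : IsWeightedHomogeneous w6 ((X 2 * X 5 : P6) ^ p) (fun _ => p) := by
  rw [mon_wz]
  apply isWeightedHomogeneous_monomial
  rw [weight_w6]
  funext j
  fin_cases j <;> simp [Finsupp.single_apply]


lemma uniq_a (p k : ℕ) : ∀ m : Fin 6 →₀ ℕ,
    Finsupp.weight w6 m = ![0, p+k, p+k, p] →
    m = Finsupp.single 0 p + Finsupp.single 4 k + Finsupp.single 5 k := by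
  intro m hm
  rw [weight_w6] at hm
  have h0 := congrFun hm 0
  have h1 := congrFun hm 1
  have h2 := congrFun hm 2
  have h3 := congrFun hm 3
  simp at h0 h1 h2 h3
  ext i
  fin_cases i <;> simp [Finsupp.single_apply] <;> omega

lemma uniq_b (p k : ℕ) : ∀ m : Fin 6 →₀ ℕ,
    Finsupp.weight w6 m = ![p+k, 0, p+k, p] →
    m = Finsupp.single 1 p + Finsupp.single 3 k + Finsupp.single 5 k := by
  intro m hm
  rw [weight_w6] at hm
  have h0 := congrFun hm 0
  have h1 := congrFun hm 1
  have h2 := congrFun hm 2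
  have h3 := congrFun hm 3
  simp at h0 h1 h2 h3
  ext i
  fin_cases i <;> simp [Finsupp.single_apply] <;> omega

lemma uniq_c (p k : ℕ) : ∀ m : Fin 6 →₀ ℕ,
    Finsupp.weight w6 m = ![p+k, p+k, 0, p] →
    m = Finsupp.single 2 p + Finsupp.single 3 k + Finsupp.single 4 k := by
  intro m hm
  rw [weight_w6] at hm
  have h0 := congrFun hm 0
  have h1 := congrFun hm 1
  have h2 := congrFun hm 2
  have h3 := congrFun hm 3
  simp at h0 h1 h2 h3
  ext i
  fin_cases i <;> simp [Finsupp.single_apply] <;> omega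

lemma wt_a (p k : ℕ) : Finsupp.weight w6
    (Finsupp.single 0 p + Finsupp.single 4 k + Finsupp.single 5 k) = ![0, p+k, p+k, p] := by
  rw [weight_w6]; funext j; fin_cases j <;> simp [Finsupp.single_apply]

lemma wt_b (p k : ℕ) : Finsupp.weight w6
    (Finsupp.single 1 p + Finsupp.single 3 k + Finsupp.single 5 k) = ![p+k, 0, p+k, p] := by
  rw [weight_w6]; funext j; fin_cases j <;> simp [Finsupp.single_apply]

lemma wt_c (p k : ℕ) : Finsupp.weight w6
    (Finsupp.single 2 p + Finsupp.single 3 k + Finsupp.single 4 k) = ![p+k, p+k, 0, p] := by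
  rw [weight_w6]; funext j; fin_cases j <;> simp [Finsupp.single_apply]

lemma mon_prod_a (p k : ℕ) (c : ℤ) :
    (monomial (Finsupp.single 0 p + Finsupp.single 4 k + Finsupp.single 5 k) c : P6) =
      C c * ((X 0) ^ p * (X 4) ^ k * (X 5) ^ k) := by
  rw [X_pow_eq_monomial, X_pow_eq_monomial, X_pow_eq_monomial, monomial_mul, monomial_mul,
    C_mul_monomial]
  simp

lemma mon_prod_b (p k : ℕ) (c : ℤ) :
    (monomial (Finsupp.single 1 p + Finsupp.single 3 k + Finsupp.single 5 k) c : P6) =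
      C c * ((X 1) ^ p * (X 3) ^ k * (X 5) ^ k) := by
  rw [X_pow_eq_monomial, X_pow_eq_monomial, X_pow_eq_monomial, monomial_mul, monomial_mul,
    C_mul_monomial]
  simp

lemma mon_prod_c (p k : ℕ) (c : ℤ) :
    (monomial (Finsupp.single 2 p + Finsupp.single 3 k + Finsupp.single 4 k) c : P6) =
      C c * ((X 2) ^ p * (X 3) ^ k * (X 4) ^ k) := by
  rw [X_pow_eq_monomial, X_pow_eq_monomial, X_pow_eq_monomial, monomial_mul, monomial_mul,
    C_mul_monomial]
  simp

theorem keyP (p k : ℕ) (hp : 0 < p) (L a b c g h : P6)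
    (hE : L * (X 3 * X 4 * X 5 : P6) ^ k =
      a * (X 3) ^ (p+k) + b * (X 4) ^ (p+k) + c * (X 5) ^ (p+k) + g * fpoly)
    (hL : (p : P6) * L = (X 0 * X 3) ^ p + (X 1 * X 4) ^ p + (X 2 * X 5) ^ p + h * fpoly) :
    ∃ α β γ : ℤ, fpoly ∣
      L - (C α * (X 0 * X 3) ^ p + C β * (X 1 * X 4) ^ p + C γ * (X 2 * X 5) ^ p) := by
  set T : Fin 4 → ℕ := ![p+k, p+k, p+k, p] with hT
  -- degree splittings
  have hT1 : T = (fun _ => p) + ![k,k,k,0] := by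
    funext j; fin_cases j <;> simp [hT]
  have hT2 : T = ![0, p+k, p+k, p] + ![p+k,0,0,0] := by
    funext j; fin_cases j <;> simp [hT]
  have hT3 : T = ![p+k, 0, p+k, p] + ![0,p+k,0,0] := by
    funext j; fin_cases j <;> simp [hT]
  have hT4 : T = ![p+k, p+k, 0, p] + ![0,0,p+k,0] := by
    funext j; fin_cases j <;> simp [hT]
  have hT5 : T = ![p+k-1, p+k-1, p+k-1, p-1] + ![1,1,1,1] := by
    funext j; fin_cases j <;> simp [hT] <;> omega
  have hDD : (fun _ => p : Fin 4 → ℕ) = ![p-1,p-1,p-1,p-1] + ![1,1,1,1] := by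
    funext j; fin_cases j <;> simp <;> omega
  -- apply the T-component to hE
  have hmain := congrArg (π T) hE
  rw [map_add, map_add, map_add] at hmain
  rw [show π T (L * (X 3 * X 4 * X 5 : P6) ^ k) = π (fun _ => p) L * (X 3 * X 4 * X 5) ^ k by
      rw [hT1]; exact comp_mul_hom _ _ _ _ (wh_xyz k)] at hmain
  rw [show π T (a * (X 3 : P6) ^ (p+k)) = π ![0, p+k, p+k, p] a * (X 3) ^ (p+k) by
      rw [hT2]; exact comp_mul_hom _ _ _ _ (wh_x (p+k))] at hmain
  rw [show π T (b * (X 4 : P6) ^ (p+k)) = π ![p+k, 0, p+k, p] b * (X 4) ^ (p+k) by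
      rw [hT3]; exact comp_mul_hom _ _ _ _ (wh_y (p+k))] at hmain
  rw [show π T (c * (X 5 : P6) ^ (p+k)) = π ![p+k, p+k, 0, p] c * (X 5) ^ (p+k) by
      rw [hT4]; exact comp_mul_hom _ _ _ _ (wh_z (p+k))] at hmain
  rw [show π T (g * fpoly) = π ![p+k-1, p+k-1, p+k-1, p-1] g * fpoly by
      rw [hT5]; exact comp_mul_hom _ _ _ _ wh_f] at hmain
  -- identify the components of a, b, c
  rw [comp_eq_monomial a _ _ (wt_a p k) (uniq_a p k), mon_prod_a] at hmain
  rw [comp_eq_monomial b _ _ (wt_b p k) (uniq_b p k), mon_prod_b] at hmain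
  rw [comp_eq_monomial c _ _ (wt_c p k) (uniq_c p k), mon_prod_c] at hmain
  set α := coeff (Finsupp.single 0 p + Finsupp.single 4 k + Finsupp.single 5 k) a with hα
  set β := coeff (Finsupp.single 1 p + Finsupp.single 3 k + Finsupp.single 5 k) b with hβ
  set γ := coeff (Finsupp.single 2 p + Finsupp.single 3 k + Finsupp.single 4 k) c with hγ
  refine ⟨α, β, γ, ?_⟩
  -- first divisibility
  have hdvd1 : fpoly ∣ π (fun _ => p) L -
      (C α * (X 0 * X 3) ^ p + C β * (X 1 * X 4) ^ p + C γ * (X 2 * X 5) ^ p) := by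
    have hprod : (π (fun _ => p) L -
        (C α * (X 0 * X 3) ^ p + C β * (X 1 * X 4) ^ p + C γ * (X 2 * X 5) ^ p)) *
        (X 3 * X 4 * X 5) ^ k = fpoly * π ![p+k-1, p+k-1, p+k-1, p-1] g := by
      linear_combination hmain
    rcases fpoly_prime.dvd_or_dvd ⟨_, hprod⟩ with h1 | h2
    · exact h1
    · exact absurd h2 (fpoly_not_dvd_xyz k)
  -- second divisibility
  have hD2 := congrArg (π (fun _ => p)) hL
  rw [map_add, map_add, map_add] at hD2
  rw [show ((p : ℕ) : P6) * L = C ((p : ℕ) : ℤ) * L by rw [map_natCast (C : ℤ →+* P6) p]] at hD2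
  rw [weightedHomogeneousComponent_C_mul] at hD2
  rw [map_natCast (C : ℤ →+* P6) p] at hD2
  rw [(wh_ux p).weightedHomogeneousComponent_same, (wh_vy p).weightedHomogeneousComponent_same,
    (wh_wz p).weightedHomogeneousComponent_same] at hD2
  rw [show π (fun _ => p) (h * fpoly) = π ![p-1,p-1,p-1,p-1] h * fpoly by
      rw [hDD]; exact comp_mul_hom _ _ _ _ wh_f] at hD2
  have hdvd2 : fpoly ∣ L - π (fun _ => p) L := by
    have hprod : ((p : ℕ) : P6) * (L - π (fun _ => p) L) =
        fpoly * (h - π ![p-1,p-1,p-1,p-1] h) := by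
      linear_combination hL - hD2
    rcases fpoly_prime.dvd_or_dvd ⟨_, hprod⟩ with h1 | h2
    · exact absurd h1 (fpoly_not_dvd_nat p hp.ne')
    · exact h2
  have := dvd_add hdvd2 hdvd1
  convert this using 1
  ring


end Aux


section Final

local notation "Ifp" => Ideal.span {(X 0 : MvPolynomial (Fin 6) ℤ) * X 3 + X 1 * X 4 + X 2 * X 5}
local notation "mkQ" => Ideal.Quotient.mk Ifp

lemma hu_mk : hu = mkQ (X 0) := rfl
lemma hv_mk : hv = mkQ (X 1) := rfl
lemma hw_mk : hw = mkQ (X 2) := rfl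
lemma hx_mk : hx = mkQ (X 3) := rfl
lemma hy_mk : hy = mkQ (X 4) := rfl
lemma hz_mk : hz = mkQ (X 5) := rfl

lemma mk_fpoly : mkQ fpoly = 0 :=
  Ideal.Quotient.eq_zero_iff_mem.mpr (Ideal.subset_span rfl)

theorem lambda_mul_mem_iff (p : ℕ) (hp : p.Prime) (lam : HypR)
    (hlam : (p : HypR) * lam = (hu * hx) ^ p + (hv * hy) ^ p + (hw * hz) ^ p) (k : ℕ) :
    lam * (hx * hy * hz) ^ k ∈
        Ideal.span {hx ^ (p + k), hy ^ (p + k), hz ^ (p + k)} ↔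
      lam ∈ Ideal.span {(hu * hx) ^ p, (hv * hy) ^ p, (hw * hz) ^ p} := by
  constructor
  · intro hmem
    obtain ⟨A, A', hA', heq⟩ := Ideal.mem_span_insert.mp hmem
    obtain ⟨B, B', hB', heqB⟩ := Ideal.mem_span_insert.mp hA'
    obtain ⟨Cc, heqC⟩ := Ideal.mem_span_singleton'.mp hB'
    subst heqB; subst heqC
    obtain ⟨L, rfl⟩ := Ideal.Quotient.mk_surjective lam
    obtain ⟨a, rfl⟩ := Ideal.Quotient.mk_surjective A
    obtain ⟨b, rfl⟩ := Ideal.Quotient.mk_surjective B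
    obtain ⟨c, rfl⟩ := Ideal.Quotient.mk_surjective Cc
    -- turn heq into a polynomial identity mod fpoly
    have heq0 : mkQ (L * (X 3 * X 4 * X 5) ^ k -
        (a * (X 3) ^ (p+k) + b * (X 4) ^ (p+k) + c * (X 5) ^ (p+k))) = 0 := by
      rw [hx_mk, hy_mk, hz_mk] at heq
      simp only [map_sub, map_add, map_mul, map_pow]
      linear_combination heq
    obtain ⟨g, hg⟩ := Ideal.mem_span_singleton.mp (Ideal.Quotient.eq_zero_iff_mem.mp heq0)
    rw [show (X 0 : P6) * X 3 + X 1 * X 4 + X 2 * X 5 = fpoly from rfl] at hg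
    have hE : L * (X 3 * X 4 * X 5 : P6) ^ k =
        a * (X 3) ^ (p+k) + b * (X 4) ^ (p+k) + c * (X 5) ^ (p+k) + g * fpoly := by
      linear_combination hg
    -- turn hlam into a polynomial identity mod fpoly
    have hlam0 : mkQ ((p : P6) * L -
        ((X 0 * X 3) ^ p + (X 1 * X 4) ^ p + (X 2 * X 5) ^ p)) = 0 := by
      rw [hu_mk, hv_mk, hw_mk, hx_mk, hy_mk, hz_mk] at hlam
      simp only [map_sub, map_add, map_mul, map_pow, map_natCast]
      linear_combination hlam
    obtain ⟨h, hh⟩ := Ideal.mem_span_singleton.mp (Ideal.Quotient.eq_zero_iff_mem.mp hlam0)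
    rw [show (X 0 : P6) * X 3 + X 1 * X 4 + X 2 * X 5 = fpoly from rfl] at hh
    have hLp : (p : P6) * L =
        (X 0 * X 3) ^ p + (X 1 * X 4) ^ p + (X 2 * X 5) ^ p + h * fpoly := by
      linear_combination hh
    obtain ⟨α, β, γ, hdvd⟩ := keyP p k hp.pos L a b c g h hE hLp
    obtain ⟨q, hq⟩ := hdvd
    have hrw : mkQ L = mkQ (C α) * (hu * hx) ^ p + mkQ (C β) * (hv * hy) ^ p +
        mkQ (C γ) * (hw * hz) ^ p := by
      have hLrw : L = C α * (X 0 * X 3) ^ p + C β * (X 1 * X 4) ^ p +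
          C γ * (X 2 * X 5) ^ p + fpoly * q := by linear_combination hq
      rw [hLrw, hu_mk, hv_mk, hw_mk, hx_mk, hy_mk, hz_mk]
      simp only [map_add, map_mul, map_pow]
      rw [show mkQ fpoly = 0 from mk_fpoly]
      ring
    rw [hrw]
    refine Ideal.add_mem _ (Ideal.add_mem _ ?_ ?_) ?_
    · exact Ideal.mul_mem_left _ _ (Ideal.subset_span (Set.mem_insert _ _))
    · exact Ideal.mul_mem_left _ _
        (Ideal.subset_span (Set.mem_insert_of_mem _ (Set.mem_insert _ _)))
    · exact Ideal.mul_mem_left _ _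
        (Ideal.subset_span (Set.mem_insert_of_mem _ (Set.mem_insert_of_mem _ rfl)))
  · intro hmem
    obtain ⟨A, A', hA', heq⟩ := Ideal.mem_span_insert.mp hmem
    obtain ⟨B, B', hB', heqB⟩ := Ideal.mem_span_insert.mp hA'
    obtain ⟨Cc, heqC⟩ := Ideal.mem_span_singleton'.mp hB'
    subst heqB; subst heqC
    rw [heq]
    have expand : (A * (hu * hx) ^ p + (B * (hv * hy) ^ p + Cc * (hw * hz) ^ p)) *
        (hx * hy * hz) ^ k =
        (A * hu ^ p * hy ^ k * hz ^ k) * hx ^ (p + k) +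
          ((B * hv ^ p * hx ^ k * hz ^ k) * hy ^ (p + k) +
            (Cc * hw ^ p * hx ^ k * hy ^ k) * hz ^ (p + k)) := by
      ring
    rw [expand]
    refine Ideal.add_mem _ ?_ (Ideal.add_mem _ ?_ ?_)
    · exact Ideal.mul_mem_left _ _ (Ideal.subset_span (Set.mem_insert _ _))
    · exact Ideal.mul_mem_left _ _
        (Ideal.subset_span (Set.mem_insert_of_mem _ (Set.mem_insert _ _)))
    · exact Ideal.mul_mem_left _ _
        (Ideal.subset_span (Set.mem_insert_of_mem _ (Set.mem_insert_of_mem _ rfl)))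

end Final
end

section
/- For every prime p, λ = ((ux)^p + (vy)^p + (wz)^p)/p does not lie in the ideal (p, (ux)^p, (vy)^p, (wz)^p) of R = ℤ[U,V,W,X,Y,Z]/(UX+VY+WZ). -/
open MvPolynomial

lemma key_m_ne0 {p : ℕ} (hp : 2 ≤ p) (i : Fin 2) :
    Finsupp.single i p ≠ (Finsupp.single 0 1 + Finsupp.single 1 (p-1) : Fin 2 →₀ ℕ) := by
  intro h
  fin_cases i
  · have := DFunLike.congr_fun h (1 : Fin 2)
    simp [Finsupp.single_apply] at this
    omega
  · have := DFunLike.congr_fun h (0 : Fin 2)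
    simp [Finsupp.single_apply] at this

lemma coeff_Xpow_zero {R : Type*} [CommRing R] {p : ℕ} (hp : 2 ≤ p) (i : Fin 2) :
    coeff (Finsupp.single 0 1 + Finsupp.single 1 (p-1)) ((X i : MvPolynomial (Fin 2) R) ^ p) = 0 := by
  rw [coeff_X_pow, if_neg (key_m_ne0 hp i)]

lemma coeff_mul_Xpow_zero {R : Type*} [CommRing R] {p : ℕ} (hp : 2 ≤ p) (i : Fin 2)
    (q : MvPolynomial (Fin 2) R) :
    coeff (Finsupp.single 0 1 + Finsupp.single 1 (p-1)) (q * (X i : MvPolynomial (Fin 2) R) ^ p) = 0 := by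
  rw [X_pow_eq_monomial, coeff_mul_monomial', if_neg]
  rw [Finsupp.single_le_iff]
  fin_cases i
  · simp [Finsupp.single_apply]; omega
  · simp [Finsupp.single_apply]; omega

lemma coeff_add_pow_key {p : ℕ} (hp : 2 ≤ p) :
    coeff (Finsupp.single 0 1 + Finsupp.single 1 (p-1))
      ((X 0 + X 1 : MvPolynomial (Fin 2) ℤ) ^ p) = p := by
  rw [add_pow, coeff_sum]
  have hterm : ∀ k, ((X 0 : MvPolynomial (Fin 2) ℤ)^k * (X 1)^(p-k) * (p.choose k : MvPolynomial (Fin 2) ℤ))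
      = monomial (Finsupp.single 0 k + Finsupp.single 1 (p-k)) ((p.choose k : ℤ)) := by
    intro k
    have : ((p.choose k : MvPolynomial (Fin 2) ℤ)) = monomial 0 ((p.choose k : ℤ)) := by
      rw [← C_apply, C_eq_coe_nat]
    rw [X_pow_eq_monomial, X_pow_eq_monomial, monomial_mul, this, monomial_mul]
    simp
  rw [Finset.sum_eq_single 1]
  · rw [hterm, coeff_monomial, if_pos rfl]
    simp
  · intro k hk hk1
    rw [hterm, coeff_monomial, if_neg]
    intro h
    have := DFunLike.congr_fun h (0 : Fin 2)
    simp [Finsupp.single_apply] at this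
    exact hk1 this
  · intro h
    simp at h
    omega


/-- The specialization `u,v,w ↦ 1`, `x ↦ X 0`, `y ↦ X 1`, `z ↦ -(X 0 + X 1)`. -/
noncomputable def gg : Fin 6 → MvPolynomial (Fin 2) ℤ := ![1, 1, 1, X 0, X 1, -(X 0 + X 1)]

set_option linter.unnecessarySimpa false in
lemma key_contradiction (p : ℕ) (hp : p.Prime) (A B C' D E : MvPolynomial (Fin 6) ℤ)
    (hE : E * ((X 0 : MvPolynomial (Fin 6) ℤ) * X 3 + X 1 * X 4 + X 2 * X 5) =
      (X 0 * X 3) ^ p + (X 1 * X 4) ^ p + (X 2 * X 5) ^ p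
      - (p : MvPolynomial (Fin 6) ℤ) *
        ((p : MvPolynomial (Fin 6) ℤ) * A + B * (X 0 * X 3) ^ p
          + C' * (X 1 * X 4) ^ p + D * (X 2 * X 5) ^ p)) : False := by
  haveI : Fact p.Prime := ⟨hp⟩
  have hEq : (X 0 : MvPolynomial (Fin 2) ℤ)^p + (X 1)^p + (-(X 0 + X 1))^p
      = (p : MvPolynomial (Fin 2) ℤ) * ((p : MvPolynomial (Fin 2) ℤ) * aeval gg A + aeval gg B * (X 0)^p
          + aeval gg C' * (X 1)^p + aeval gg D * (-(X 0 + X 1))^p) := by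
    have h0 := congrArg (aeval gg) hE
    simp only [map_mul, map_add, map_sub, map_pow, map_natCast, aeval_X] at h0
    rw [show gg 0 = 1 from rfl, show gg 1 = 1 from rfl, show gg 2 = 1 from rfl,
      show gg 3 = (X 0 : MvPolynomial (Fin 2) ℤ) from rfl,
      show gg 4 = (X 1 : MvPolynomial (Fin 2) ℤ) from rfl,
      show gg 5 = -((X 0 : MvPolynomial (Fin 2) ℤ) + X 1) from rfl] at h0
    linear_combination -h0
  -- step 2: divide by p over the integers, using (X0+X1)^p = X0^p + X1^p + p*h
  have hpne : ((p:ℤ)) ≠ 0 := by exact_mod_cast hp.ne_zero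
  have hdvd : (MvPolynomial.C (p:ℤ) : MvPolynomial (Fin 2) ℤ) ∣
      ((X 0 + X 1)^p - (X 0)^p - (X 1)^p) := by
    have hker : ((X 0 + X 1 : MvPolynomial (Fin 2) ℤ)^p - (X 0)^p - (X 1)^p) ∈
        RingHom.ker (MvPolynomial.map (Int.castRingHom (ZMod p))) := by
      rw [RingHom.mem_ker, map_sub, map_sub, map_pow, map_pow, map_pow, map_add,
        MvPolynomial.map_X, MvPolynomial.map_X, add_pow_char]
      ring
    rwa [MvPolynomial.ker_map, ZMod.ker_intCastRingHom, Ideal.map_span, Set.image_singleton,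
      Ideal.mem_span_singleton] at hker
  obtain ⟨h, hh⟩ := hdvd
  obtain ⟨e, he⟩ : ∃ e : ℤ, (p:ℤ) * e = 1 + (-1)^p := by
    rcases hp.eq_two_or_odd' with h2 | hodd
    · exact ⟨1, by rw [h2]; norm_num⟩
    · exact ⟨0, by rw [hodd.neg_one_pow]; ring⟩
  have hCp : (MvPolynomial.C (p:ℤ) : MvPolynomial (Fin 2) ℤ) = (p : MvPolynomial (Fin 2) ℤ) := by
    simp
  have hPne : ((p : MvPolynomial (Fin 2) ℤ)) ≠ 0 := by
    rw [← hCp]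
    simpa using hpne
  have E3 : C e * ((X 0 : MvPolynomial (Fin 2) ℤ)^p + (X 1)^p) + (-1)^p * h
      = (p : MvPolynomial (Fin 2) ℤ) * aeval gg A + aeval gg B * (X 0)^p
        + aeval gg C' * (X 1)^p + (-1)^p * aeval gg D * ((X 0)^p + (X 1)^p)
        + (-1)^p * (p : MvPolynomial (Fin 2) ℤ) * aeval gg D * h := by
    apply mul_left_cancel₀ hPne
    have hneg : (-(X 0 + X 1) : MvPolynomial (Fin 2) ℤ)^p
        = (-1)^p * ((X 0)^p + (X 1)^p + (p : MvPolynomial (Fin 2) ℤ) * h) := by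
      rw [neg_pow]
      rw [hCp] at hh
      linear_combination ((-1 : MvPolynomial (Fin 2) ℤ)^p) * hh
    rw [hneg] at hEq
    have hCe : (p : MvPolynomial (Fin 2) ℤ) * C e = 1 + (-1)^p := by
      rw [← hCp, ← map_mul, he, map_add, map_one, map_pow, map_neg, map_one]
    linear_combination hEq + ((X 0 : MvPolynomial (Fin 2) ℤ)^p + (X 1)^p) * hCe
  -- step 3: reduce mod p and extract the coefficient of x*y^(p-1)
  set m : Fin 2 →₀ ℕ := Finsupp.single 0 1 + Finsupp.single 1 (p-1) with hm
  have hp2 : 2 ≤ p := hp.two_le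
  have hcoeffh : coeff m h = 1 := by
    apply mul_left_cancel₀ hpne
    have := congrArg (coeff m) hh
    rw [coeff_sub, coeff_sub, coeff_add_pow_key hp2, coeff_Xpow_zero hp2 0,
      coeff_Xpow_zero hp2 1, coeff_C_mul] at this
    simpa using this.symm
  have E4 := congrArg (MvPolynomial.map (Int.castRingHom (ZMod p))) E3
  simp only [map_add, map_mul, map_pow, map_natCast, map_neg, map_one, MvPolynomial.map_C,
    MvPolynomial.map_X, CharP.cast_eq_zero, zero_mul, mul_zero, add_zero, zero_add] at E4
  rw [show ((-1 : MvPolynomial (Fin 2) (ZMod p)))^p = C ((-1 : ZMod p)^p) by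
      rw [map_pow, map_neg, map_one]] at E4
  have E5 := congrArg (coeff m) E4
  rw [hm] at hcoeffh E5
  simp only [mul_add, coeff_add, coeff_C_mul, coeff_Xpow_zero hp2, coeff_mul_Xpow_zero hp2,
    coeff_map, hcoeffh, map_one, mul_zero, add_zero, zero_add, mul_one] at E5
  have hne : ((-1 : ZMod p))^p ≠ 0 := pow_ne_zero _ (neg_ne_zero.mpr one_ne_zero)
  exact hne (by simpa using E5)




set_option maxHeartbeats 1000000 in
set_option synthInstance.maxHeartbeats 400000 in
theorem lambda_not_mem (p : ℕ) (hp : p.Prime) (lam : HypR)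
    (hlam : (p : HypR) * lam = (hu * hx) ^ p + (hv * hy) ^ p + (hw * hz) ^ p) :
    lam ∉ Ideal.span {(p : HypR), (hu * hx) ^ p, (hv * hy) ^ p, (hw * hz) ^ p} := by
  intro hmem
  haveI : Fact p.Prime := ⟨hp⟩
  set F : MvPolynomial (Fin 6) ℤ := X 0 * X 3 + X 1 * X 4 + X 2 * X 5 with hF
  -- decompose membership
  rw [Ideal.mem_span_insert] at hmem
  obtain ⟨α, z1, hz1, hdec1⟩ := hmem
  rw [Ideal.mem_span_insert] at hz1
  obtain ⟨β, z2, hz2, hdec2⟩ := hz1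
  rw [Ideal.mem_span_insert] at hz2
  obtain ⟨γ, z3, hz3, hdec3⟩ := hz2
  rw [Ideal.mem_span_singleton] at hz3
  obtain ⟨δ, hdec4⟩ := hz3
  -- lift to polynomials
  obtain ⟨A, hA⟩ := Ideal.Quotient.mk_surjective α
  obtain ⟨B, hB⟩ := Ideal.Quotient.mk_surjective β
  obtain ⟨C', hC⟩ := Ideal.Quotient.mk_surjective γ
  obtain ⟨D, hD⟩ := Ideal.Quotient.mk_surjective δ
  set G : MvPolynomial (Fin 6) ℤ :=
    (X 0 * X 3) ^ p + (X 1 * X 4) ^ p + (X 2 * X 5) ^ p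
      - (p : MvPolynomial (Fin 6) ℤ) *
        ((p : MvPolynomial (Fin 6) ℤ) * A + B * (X 0 * X 3) ^ p
          + C' * (X 1 * X 4) ^ p + D * (X 2 * X 5) ^ p) with hG
  have hGmem : G ∈ Ideal.span {F} := by
    rw [← Ideal.Quotient.eq_zero_iff_mem]
    have : (Ideal.Quotient.mk (Ideal.span {F})) G
        = ((hu*hx)^p + (hv*hy)^p + (hw*hz)^p)
          - (p : HypR) * ((p:HypR) * α + β * (hu*hx)^p + γ * (hv*hy)^p + δ * (hw*hz)^p) := by
      simp only [hG, map_sub, map_add, map_mul, map_pow, map_natCast, hA, hB, hC, hD]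
      rw [← hA, ← hB, ← hC, ← hD]
      rfl
    rw [this, ← hlam, hdec1, hdec2, hdec3, hdec4]
    ring
  rw [Ideal.mem_span_singleton'] at hGmem
  obtain ⟨E, hE⟩ := hGmem
  rw [hG, hF] at hE
  exact key_contradiction p hp A B C' D E hE
end

section
/- For all nonnegative integers k, m, n, s, i in suitable ranges, the WZ-pair relation G(m, i+1) − G(m, i) = (2k+m+2)(m+s−k)·F(m,i) − (m+1)(m+s+1)·F(m+1,i) holds, where F(m,i) = (−1)^i C(2k+1, s+i) C(k+i, k) C(k+m−i, k) and G(m,i) = [i(s+i)(k+m+1−i)/(m+1−i)]·F(m,i). -/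
/-- The WZ summand `F(m,i) = (-1)^i C(2k+1, s+i) C(k+i, k) C(k+m-i, k)` (over ℚ). -/
def Fwz (k s m i : ℕ) : ℚ :=
  (-1) ^ i * ((2 * k + 1).choose (s + i)) * ((k + i).choose k) * ((k + m - i).choose k)

lemma nat_key (a b : ℕ) : (a+b+1).choose a * (b+1) = (a+b).choose a * (a+b+1) := by
  have h := Nat.add_one_mul_choose_eq (a+b) b
  have h1 : (a+b).choose b = (a+b).choose a := by
    rw [← Nat.choose_symm (Nat.le_add_right a b)]; simp
  have h2 : (a+b+1).choose (b+1) = (a+b+1).choose a := by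
    rw [← Nat.choose_symm (by omega : b+1 ≤ a+b+1)]
    congr 1; omega
  rw [h1, h2] at h
  rw [← h, Nat.mul_comm]

lemma rat_key (a b : ℕ) :
    (((a+b+1).choose a : ℚ)) * ((b:ℚ)+1) = ((a+b).choose a : ℚ) * ((a:ℚ)+b+1) := by
  exact_mod_cast nat_key a b

lemma rat_A (n r : ℕ) :
    ((n.choose (r+1) : ℚ)) * ((r:ℚ)+1) = (n.choose r : ℚ) * ((n:ℚ) - r) := by
  rcases le_or_gt r n with h|h
  · have h0 := Nat.choose_succ_right_eq n r
    have h1 : ((n.choose (r+1) : ℚ)) * ((r:ℚ)+1) = (n.choose r : ℚ) * ((n - r : ℕ) : ℚ) := by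
      exact_mod_cast h0
    rw [h1, Nat.cast_sub h]
  · rw [Nat.choose_eq_zero_of_lt h, Nat.choose_eq_zero_of_lt (by omega)]
    simp

set_option maxHeartbeats 1600000 in
/-- The certificate recurrence `G(m,i+1) - G(m,i) = (2k+m+2)(m+s-k) F(m,i)
- (m+1)(m+s+1) F(m+1,i)`, where `G(m,i) = i(s+i)(k+m+1-i)/(m+1-i) · F(m,i)`,
stated with denominators cleared (multiplied through by `(m-i)(m+1-i)`). -/
theorem wz_certificate (k s m i : ℕ) (hi : i ≤ m) :
    ((m : ℚ) + 1 - i) *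
        (((i : ℚ) + 1) * ((s : ℚ) + i + 1) * ((k : ℚ) + m + 1 - (i + 1)) * Fwz k s m (i + 1))
      - ((m : ℚ) - i) *
        ((i : ℚ) * ((s : ℚ) + i) * ((k : ℚ) + m + 1 - i) * Fwz k s m i)
      = ((m : ℚ) - i) * ((m : ℚ) + 1 - i) *
        (((2 : ℚ) * k + m + 2) * ((m : ℚ) + s - k) * Fwz k s m i
          - ((m : ℚ) + 1) * ((m : ℚ) + s + 1) * Fwz k s (m + 1) i) := by
  rcases eq_or_lt_of_le hi with rfl | him
  · -- boundary case i = m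
    rcases Nat.eq_zero_or_pos k with rfl | hk
    · simp only [Fwz]
      ring
    · have hz : (k + i - (i + 1)).choose k = 0 := Nat.choose_eq_zero_of_lt (by omega)
      simp only [Fwz, hz]
      push_cast
      ring
  · -- main case i < m
    set d : ℕ := m - i - 1 with hd_def
    have e1 : s + (i+1) = s + i + 1 := by omega
    have e2 : k + (i+1) = k + i + 1 := by omega
    have e3 : k + m - (i+1) = k + d := by omega
    have e4 : k + m - i = k + d + 1 := by omega
    have e5 : k + (m+1) - i = k + d + 2 := by omega
    simp only [Fwz, e1, e2, e3, e4, e5]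
    have hd : (d : ℚ) = (m : ℚ) - i - 1 := by
      have : (d : ℕ) + i + 1 = m := by omega
      have h' := congrArg (Nat.cast : ℕ → ℚ) this
      push_cast at h'
      linarith
    have R1 := rat_A (2*k+1) (s+i)
    have R2 := rat_key k i
    have R3 := rat_key k d
    have R4 := rat_key k (d+1)
    have e6 : k + (d+1) + 1 = k + d + 2 := by omega
    have e7 : k + (d+1) = k + d + 1 := by omega
    have e8 : s + i + 1 = s + (i+1) := by omega
    rw [e6, e7] at R4
    push_cast at R1 R2 R3 R4
    set a : ℚ := ((2*k+1).choose (s+i) : ℚ) with ha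
    set a1 : ℚ := ((2*k+1).choose (s+i+1) : ℚ) with ha1
    set b : ℚ := ((k+i).choose k : ℚ) with hb
    set b1 : ℚ := ((k+i+1).choose k : ℚ) with hb1
    set c0 : ℚ := ((k+d).choose k : ℚ) with hc0
    set c : ℚ := ((k+d+1).choose k : ℚ) with hc
    set c1 : ℚ := ((k+d+2).choose k : ℚ) with hc1
    have n1 : ((s:ℚ)+i+1) ≠ 0 := by positivity
    have n2 : ((i:ℚ)+1) ≠ 0 := by positivity
    have n3 : ((k:ℚ)+d+1) ≠ 0 := by positivity
    have n4 : ((d:ℚ)+2) ≠ 0 := by positivity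
    have ea1 : a1 = a * (2*(k:ℚ)+1 - s - i) / ((s:ℚ)+i+1) := by
      field_simp
      linarith [R1]
    have eb1 : b1 = b * ((k:ℚ)+i+1) / ((i:ℚ)+1) := by
      field_simp
      linarith [R2]
    have ec0 : c0 = c * ((d:ℚ)+1) / ((k:ℚ)+d+1) := by
      field_simp
      linarith [R3]
    have ec1 : c1 = c * ((k:ℚ)+d+2) / ((d:ℚ)+2) := by
      field_simp
      linarith [R4]
    rw [ea1, eb1, ec0, ec1, hd]
    have hmi : (i:ℚ) < m := by exact_mod_cast him
    have n5 : (k:ℚ) + ((m:ℚ)-i-1) + 1 ≠ 0 := by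
      have : (0:ℚ) ≤ k := Nat.cast_nonneg k
      intro h; nlinarith
    have n6 : ((m:ℚ)-i-1) + 2 ≠ 0 := by intro h; nlinarith
    field_simp
    ring
end

section
/- For nonnegative integers k, m with 0 ≤ m ≤ k and 0 ≤ r ≤ k, the identity (−1)^k C(m+r, m) C(2k+m+1, k−r) = ∑_{i=0}^{k−r} (−1)^k C(k−i, r) C(k+i, k) C(k+m−i, m) holds; equivalently, C(m+r, m) C(2k+m+1, k−r) = ∑_{i=0}^{k−r} C(k−i, r) C(k+i, k) C(k+m−i, m). -/
/-!
Trinomial revision rewrites each summand as `C(m+r, m)` times `C(k+i, k) C(m+r+(s-i), m+r)`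
with `s = k - r`, and the remaining sum is the upper-negated Chu–Vandermonde convolution,
read off from `(1 - X)⁻¹ ^ (a+1) * (1 - X)⁻¹ ^ (b+1) = (1 - X)⁻¹ ^ (a+b+2)`.
-/

open Finset PowerSeries

theorem Nat.sum_antidiagonal_choose_add_mul_choose_add (a b n : ℕ) :
    ∑ ij ∈ antidiagonal n, (a + ij.1).choose a * (b + ij.2).choose b
      = (a + b + 1 + n).choose (a + b + 1) := by
  have h := congrArg (coeff n) (pow_add (mk 1 : ℤ⟦X⟧) (a + 1) (b + 1))
  rw [show a + 1 + (b + 1) = a + b + 1 + 1 by ring, coeff_mul] at h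
  simp only [mk_one_pow_eq_mk_choose_add, coeff_mk] at h
  exact_mod_cast h.symm

theorem Nat.add_choose_mul_choose {j r : ℕ} (m : ℕ) (hr : r ≤ j) :
    (j + m).choose m * j.choose r = (m + r).choose m * (j + m).choose (m + r) := by
  calc (j + m).choose m * j.choose r
      = (j + m).choose j * j.choose r := by rw [Nat.choose_symm_add]
    _ = (j + m).choose r * (j + m - r).choose (j - r) := Nat.choose_mul hr
    _ = (j + m).choose r * (j + m - r).choose m := by
        rw [Nat.choose_symm_of_eq_add (a := j - r) (b := m) (by omega)]
    _ = (j + m).choose (m + r) * (m + r).choose r := by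
        rw [Nat.choose_mul (by omega), Nat.add_sub_cancel]
    _ = (m + r).choose m * (j + m).choose (m + r) := by rw [Nat.choose_symm_add, mul_comm]

theorem sum_choose_inst_general (k m r : ℕ) (hr : r ≤ k) :
    (m + r).choose m * (2 * k + m + 1).choose (k - r)
      = ∑ i ∈ Finset.range (k - r + 1),
          (k - i).choose r * (k + i).choose k * (k + m - i).choose m := by
  have revision : ∀ i ∈ range (k - r + 1),
      (k - i).choose r * (k + i).choose k * (k + m - i).choose m
        = (m + r).choose m * ((k + i).choose k * (m + r + (k - r - i)).choose (m + r)) := by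
    intro i hi
    replace hi : i ≤ k - r := Nat.lt_succ_iff.mp (mem_range.mp hi)
    rw [show k + m - i = k - i + m by omega, show m + r + (k - r - i) = k - i + m by omega,
      mul_left_comm, ← Nat.add_choose_mul_choose m (by omega : r ≤ k - i)]
    ring
  rw [sum_congr rfl revision, ← mul_sum, ← Nat.sum_antidiagonal_eq_sum_range_succ
      (fun i j ↦ (k + i).choose k * (m + r + j).choose (m + r)),
    Nat.sum_antidiagonal_choose_add_mul_choose_add,
    show k + (m + r) + 1 + (k - r) = 2 * k + m + 1 by omega,
    Nat.choose_symm_of_eq_add (a := k - r) (b := k + (m + r) + 1) (by omega)]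

theorem sum_choose_inst (k m r : ℕ) (hm : m ≤ k) (hr : r ≤ k) :
    (m + r).choose m * (2 * k + m + 1).choose (k - r)
      = ∑ i ∈ Finset.range (k - r + 1),
          (k - i).choose r * (k + i).choose k * (k + m - i).choose m :=
  sum_choose_inst_general k m r hr
end
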